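/- arXiv:1808.04350 — 5 statements merged into one kernel-verified Lean document; each statement's English description precedes it below -/
import Mathlib

section
/- For every k ∈ {0,…,n−1} and every R > 0 there exists a constant C > 0 such that for all ε ∈ (0,1], all r ∈ [−R,R], all v ∈ ℝ^m with |v| ≤ 1, and all indices j with d_k < j ≤ d, one has |⟨e_j, exp(εrA)Bv⟩ − (ε^k r^k / k!)⟨e_j, A^k B v⟩| ≤ C ε^{k+1}. -/
/-!
Write `X = εr A`. Applying the functional `M ↦ ⟨e_j, M B v⟩` to the exponential series, the terms of
order `l < k` vanish because `A^l B v ∈ E_k`, which is spanned by the `e_i` with `i ≤ d_k < j`.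
What is left after the term of order `k` is the functional applied to the Taylor remainder
`exp X - ∑_{l ≤ k} X^l / l!`, whose norm is at most `‖X‖^(k+1) exp ‖X‖ ≤ (εR‖A‖)^(k+1) exp (R‖A‖)`.
-/

open Finset Matrix
open scoped Nat

noncomputable section

/-- The span of the vectors `A^l B v` for `l < N`, `v ∈ ℝ^m`; for `N = k` this is `E_k`. -/
def kalmanSpan (d m : ℕ) (A : Matrix (Fin d) (Fin d) ℝ) (B : Matrix (Fin d) (Fin m) ℝ)
    (N : ℕ) : Submodule ℝ (Fin d → ℝ) :=
  Submodule.span ℝ {x | ∃ l, l < N ∧ ∃ v : Fin m → ℝ, x = (A ^ l * B).mulVec v}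

/-- `d_k = dim E_k` (with `d_0 = 0`). -/
def dk {d m : ℕ} (A : Matrix (Fin d) (Fin d) ℝ) (B : Matrix (Fin d) (Fin m) ℝ) (k : ℕ) : ℕ :=
  Module.finrank ℝ (kalmanSpan d m A B k)

theorem NormedSpace.norm_exp_sub_sum_range_succ_le {𝕂 𝔸 : Type*} [RCLike 𝕂] [NormedRing 𝔸]
    [NormedAlgebra 𝕂 𝔸] [CompleteSpace 𝔸] (x : 𝔸) (N : ℕ) :
    ‖exp x - ∑ l ∈ range (N + 1), (l !⁻¹ : 𝕂) • x ^ l‖ ≤ ‖x‖ ^ (N + 1) * Real.exp ‖x‖ := by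
  rw [← (exp_series_hasSum_exp' (𝕂 := 𝕂) x).tsum_eq,
    ← (expSeries_summable' (𝕂 := 𝕂) x).sum_add_tsum_nat_add (N + 1), add_sub_cancel_left]
  have hexp := (expSeries_div_hasSum_exp ‖x‖).mul_left (‖x‖ ^ (N + 1))
  rw [← Real.exp_eq_exp_ℝ] at hexp
  refine tsum_of_norm_bounded hexp fun l => ?_
  calc ‖((l + (N + 1))! : 𝕂)⁻¹ • x ^ (l + (N + 1))‖
      ≤ ((l + (N + 1))! : ℝ)⁻¹ * ‖x‖ ^ (l + (N + 1)) := by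
        rw [norm_smul, norm_inv, RCLike.norm_natCast]
        gcongr
        exact norm_pow_le' x (by omega)
    _ ≤ (l ! : ℝ)⁻¹ * ‖x‖ ^ (l + (N + 1)) := by
        gcongr
        exact Nat.le_add_right l (N + 1)
    _ = ‖x‖ ^ (N + 1) * (‖x‖ ^ l / l !) := by ring

theorem Pi.norm_le_sqrt_sum_sq {ι : Type*} [Fintype ι] (x : ι → ℝ) : ‖x‖ ≤ √(∑ i, x i ^ 2) :=
  (pi_norm_le_iff_of_nonneg (Real.sqrt_nonneg _)).mpr fun i =>
    Real.abs_le_sqrt (Finset.single_le_sum (fun i _ => sq_nonneg (x i)) (mem_univ i))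

theorem Matrix.abs_dotProduct_le {ι : Type*} [Fintype ι] (x w : ι → ℝ) :
    |x ⬝ᵥ w| ≤ Fintype.card ι * ‖x‖ * ‖w‖ := by
  calc |∑ i, x i * w i| ≤ ∑ i, |x i * w i| := abs_sum_le_sum_abs _ _
    _ ≤ ∑ _i : ι, ‖x‖ * ‖w‖ := by
        gcongr with i
        rw [abs_mul]
        exact mul_le_mul (norm_le_pi_norm x i) (norm_le_pi_norm w i) (abs_nonneg _) (norm_nonneg _)
    _ = Fintype.card ι * ‖x‖ * ‖w‖ := by simp [mul_assoc]

theorem Matrix.dotProduct_eq_zero_of_mem_span {ι R : Type*} [Fintype ι] [CommSemiring R]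
    {x w : ι → R} {s : Set (ι → R)} (hs : ∀ y ∈ s, x ⬝ᵥ y = 0) (hw : w ∈ Submodule.span R s) :
    x ⬝ᵥ w = 0 :=
  Submodule.span_le (p := LinearMap.ker (dotProductBilin R R x)).mpr hs hw

theorem dotProduct_pow_mul_mulVec_eq_zero {d m k l : ℕ} {A : Matrix (Fin d) (Fin d) ℝ}
    {B : Matrix (Fin d) (Fin m) ℝ} {e : Fin d → Fin d → ℝ}
    (h_on : ∀ i j : Fin d, e i ⬝ᵥ e j = if i = j then (1:ℝ) else 0)
    (hE : kalmanSpan d m A B k = Submodule.span ℝ {x | ∃ j : Fin d, (j : ℕ) < dk A B k ∧ x = e j})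
    {j : Fin d} (hj : dk A B k ≤ j) (hl : l < k) (v : Fin m → ℝ) :
    e j ⬝ᵥ (A ^ l * B) *ᵥ v = 0 := by
  have hmem : (A ^ l * B) *ᵥ v ∈ kalmanSpan d m A B k := Submodule.subset_span ⟨l, hl, v, rfl⟩
  rw [hE] at hmem
  refine Matrix.dotProduct_eq_zero_of_mem_span ?_ hmem
  rintro _ ⟨i, hi, rfl⟩
  rw [h_on, if_neg (by rintro rfl; omega)]

theorem Matrix.exists_abs_dotProduct_exp_mul_mulVec_sub_sum_le {ι κ : Type*} [Fintype ι]
    [Fintype κ] [DecidableEq ι] (A : Matrix ι ι ℝ) (B : Matrix ι κ ℝ) (N : ℕ) (R : ℝ) :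
    ∃ C, 0 < C ∧ ∀ t : ℝ, |t| ≤ R → ∀ (x : ι → ℝ) (v : κ → ℝ), ‖x‖ ≤ 1 → ‖v‖ ≤ 1 →
      |x ⬝ᵥ (NormedSpace.exp (t • A) * B) *ᵥ v -
          ∑ l ∈ range (N + 1), t ^ l / l ! * (x ⬝ᵥ (A ^ l * B) *ᵥ v)| ≤ C * |t| ^ (N + 1) := by
  open scoped Matrix.Norms.Operator in
  refine ⟨Fintype.card ι * ‖B‖ * ‖A‖ ^ (N + 1) * Real.exp (R * ‖A‖) + 1, by positivity,
    fun t ht x v hx hv => ?_⟩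
  set M := NormedSpace.exp (t • A) - ∑ l ∈ range (N + 1), (l !⁻¹ : ℝ) • (t • A) ^ l
  have hlin : x ⬝ᵥ (NormedSpace.exp (t • A) * B) *ᵥ v -
      ∑ l ∈ range (N + 1), t ^ l / l ! * (x ⬝ᵥ (A ^ l * B) *ᵥ v) = x ⬝ᵥ (M * B) *ᵥ v := by
    simp only [M, Matrix.sub_mul, Matrix.sum_mul, sub_mulVec, sum_mulVec, dotProduct_sub,
      dotProduct_sum, smul_pow, Matrix.smul_mul, smul_mulVec, dotProduct_smul, smul_eq_mul]
    congr 1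
    exact sum_congr rfl fun l _ => by ring
  have hM : ‖M‖ ≤ (|t| * ‖A‖) ^ (N + 1) * Real.exp (R * ‖A‖) := by
    refine (NormedSpace.norm_exp_sub_sum_range_succ_le (t • A) N).trans ?_
    rw [norm_smul, Real.norm_eq_abs]
    gcongr
  calc |x ⬝ᵥ (NormedSpace.exp (t • A) * B) *ᵥ v -
          ∑ l ∈ range (N + 1), t ^ l / l ! * (x ⬝ᵥ (A ^ l * B) *ᵥ v)|
      ≤ Fintype.card ι * ‖x‖ * ‖(M * B) *ᵥ v‖ := hlin ▸ abs_dotProduct_le _ _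
    _ ≤ Fintype.card ι * 1 * (‖M‖ * ‖B‖ * 1) := by
        gcongr
        exact (linfty_opNorm_mulVec _ _).trans (by gcongr; exact linfty_opNorm_mul _ _)
    _ ≤ Fintype.card ι * 1 * ((|t| * ‖A‖) ^ (N + 1) * Real.exp (R * ‖A‖) * ‖B‖ * 1) := by
        gcongr
    _ ≤ (Fintype.card ι * ‖B‖ * ‖A‖ ^ (N + 1) * Real.exp (R * ‖A‖) + 1) * |t| ^ (N + 1) := by
        rw [mul_pow]
        nlinarith [pow_nonneg (abs_nonneg t) (N + 1)]

theorem exp_entry_expansion_general (d m : ℕ)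
    (A : Matrix (Fin d) (Fin d) ℝ) (B : Matrix (Fin d) (Fin m) ℝ)
    (n : ℕ)
    (e : Fin d → Fin d → ℝ)
    (h_on : ∀ i j : Fin d, e i ⬝ᵥ e j = if i = j then (1:ℝ) else 0)
    (h_adapt : ∀ k : ℕ, 1 ≤ k → k ≤ n →
      kalmanSpan d m A B k =
        Submodule.span ℝ {x | ∃ j : Fin d, (j : ℕ) < dk A B k ∧ x = e j}) :
    ∀ k : ℕ, k < n → ∀ R : ℝ, 0 < R → ∃ C : ℝ, 0 < C ∧
      ∀ ε : ℝ, 0 < ε → ε ≤ 1 → ∀ r : ℝ, |r| ≤ R →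
        ∀ v : Fin m → ℝ, Real.sqrt (∑ i, v i ^ 2) ≤ 1 →
          ∀ j : Fin d, dk A B k ≤ (j : ℕ) →
            |e j ⬝ᵥ (NormedSpace.exp ((ε * r) • A) * B).mulVec v -
                ε ^ k * r ^ k / (Nat.factorial k) *
                  (e j ⬝ᵥ (A ^ k * B).mulVec v)| ≤ C * ε ^ (k + 1) := by
  intro k hk R hR
  obtain ⟨C, hC, hbound⟩ := Matrix.exists_abs_dotProduct_exp_mul_mulVec_sub_sum_le A B k R
  refine ⟨C * R ^ (k + 1), by positivity, fun ε hε hε1 r hr v hv j hj => ?_⟩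
  have hsum : ∑ l ∈ range (k + 1), (ε * r) ^ l / l ! * (e j ⬝ᵥ (A ^ l * B) *ᵥ v) =
      ε ^ k * r ^ k / k ! * (e j ⬝ᵥ (A ^ k * B) *ᵥ v) := by
    rw [sum_range_succ, sum_eq_zero fun l hl => ?_, zero_add, mul_pow]
    have hlk := mem_range.1 hl
    rw [dotProduct_pow_mul_mulVec_eq_zero h_on (h_adapt k (by omega) hk.le) hj hlk, mul_zero]
  have hej : ‖e j‖ ≤ 1 := by
    have hunit : ∑ i, e j i ^ 2 = 1 := by simpa [dotProduct, sq] using h_on j j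
    simpa [hunit] using Pi.norm_le_sqrt_sum_sq (e j)
  have hεr : |ε * r| ≤ R := by
    rw [abs_mul, abs_of_pos hε]
    nlinarith [abs_nonneg r]
  calc _ = |e j ⬝ᵥ (NormedSpace.exp ((ε * r) • A) * B) *ᵥ v -
          ∑ l ∈ range (k + 1), (ε * r) ^ l / l ! * (e j ⬝ᵥ (A ^ l * B) *ᵥ v)| := by rw [hsum]
    _ ≤ C * |ε * r| ^ (k + 1) :=
        hbound _ hεr _ _ hej ((Pi.norm_le_sqrt_sum_sq v).trans hv)
    _ ≤ C * R ^ (k + 1) * ε ^ (k + 1) := by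
        rw [abs_mul, abs_of_pos hε, mul_pow, mul_assoc, mul_comm (ε ^ (k + 1))]
        gcongr

/-- For every `k ∈ {0,…,n−1}` and every `R > 0` there is `C > 0` such that for all
`ε ∈ (0,1]`, `r ∈ [−R,R]`, `v ∈ ℝ^m` with `|v| ≤ 1` and indices `j` with `d_k < j ≤ d`
(in one-based labelling, i.e. `d_k ≤ j` zero-based),
`|⟨e_j, exp(εrA)Bv⟩ − (ε^k r^k/k!) ⟨e_j, A^k B v⟩| ≤ C ε^{k+1}`. -/
theorem exp_entry_expansion (d m : ℕ) (hd : 0 < d) (hm : 0 < m)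
    (A : Matrix (Fin d) (Fin d) ℝ) (B : Matrix (Fin d) (Fin m) ℝ)
    (n : ℕ) (hK : kalmanSpan d m A B n = ⊤)
    (hmin : ∀ N : ℕ, kalmanSpan d m A B N = ⊤ → n ≤ N)
    (e : Fin d → Fin d → ℝ)
    (h_on : ∀ i j : Fin d, e i ⬝ᵥ e j = if i = j then (1:ℝ) else 0)
    (h_adapt : ∀ k : ℕ, 1 ≤ k → k ≤ n →
      kalmanSpan d m A B k =
        Submodule.span ℝ {x | ∃ j : Fin d, (j : ℕ) < dk A B k ∧ x = e j}) :
    ∀ k : ℕ, k < n → ∀ R : ℝ, 0 < R → ∃ C : ℝ, 0 < C ∧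
      ∀ ε : ℝ, 0 < ε → ε ≤ 1 → ∀ r : ℝ, |r| ≤ R →
        ∀ v : Fin m → ℝ, Real.sqrt (∑ i, v i ^ 2) ≤ 1 →
          ∀ j : Fin d, dk A B k ≤ (j : ℕ) →
            |e j ⬝ᵥ (NormedSpace.exp ((ε * r) • A) * B).mulVec v -
                ε ^ k * r ^ k / (Nat.factorial k) *
                  (e j ⬝ᵥ (A ^ k * B).mulVec v)| ≤ C * ε ^ (k + 1) :=
  exp_entry_expansion_general d m A B n e h_on h_adapt
end
end

section
/- For every t ∈ [0,1], ∫₀ᵗ Û(t−s) Û(−s)* ds = J_t V J_t. -/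
open Matrix MeasureTheory

noncomputable section

/-- The level of an index `j` (zero-based): the unique `k ≥ 1` with `d_{k−1} ≤ j < d_k`
(zero-based), i.e. `d_{k−1} < j+1 ≤ d_k` in one-based labelling. -/
def lvl {d m : ℕ} (A : Matrix (Fin d) (Fin d) ℝ) (B : Matrix (Fin d) (Fin m) ℝ)
    (j : Fin d) : ℕ :=
  sInf {k : ℕ | (j : ℕ) < dk A B k}

/-- The entries of the matrices `u_k`, arranged as a `d × m` array:
for `d_{k−1} < j ≤ d_k` (one-based) the `j`-th row of `u_k` is
`(⟨e_j, A^{k−1} B e_i⟩ / (k−1)!)_i`. -/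
def uEnt {d m : ℕ} (A : Matrix (Fin d) (Fin d) ℝ) (B : Matrix (Fin d) (Fin m) ℝ)
    (e : Fin d → Fin d → ℝ) (j : Fin d) (i : Fin m) : ℝ :=
  (e j ⬝ᵥ fun a => (A ^ (lvl A B j - 1) * B) a i) / Nat.factorial (lvl A B j - 1)

/-- `Û(r)`: the `d × m` matrix whose `j`-th row, for `d_{k−1} < j ≤ d_k`, is `r^{k−1}`
times the corresponding row of `u_k`. -/
def Uhat {d m : ℕ} (A : Matrix (Fin d) (Fin d) ℝ) (B : Matrix (Fin d) (Fin m) ℝ)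
    (e : Fin d → Fin d → ℝ) (r : ℝ) : Matrix (Fin d) (Fin m) ℝ :=
  Matrix.of fun j i => r ^ (lvl A B j - 1) * uEnt A B e j i

/-- `J_t`: the diagonal matrix whose `j`-th diagonal entry, for `d_{k−1} < j ≤ d_k`,
is `t^{k−1/2}` (real power). -/
def Jmat {d m : ℕ} (A : Matrix (Fin d) (Fin d) ℝ) (B : Matrix (Fin d) (Fin m) ℝ)
    (t : ℝ) : Matrix (Fin d) (Fin d) ℝ :=
  Matrix.diagonal fun j => t ^ ((lvl A B j : ℝ) - 1 / 2)

/-- `D_ε`: the diagonal matrix whose `j`-th diagonal entry, for `d_{k−1} < j ≤ d_k`,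
is `ε^{k−1}`. -/
def Dmat {d m : ℕ} (A : Matrix (Fin d) (Fin d) ℝ) (B : Matrix (Fin d) (Fin m) ℝ)
    (ε : ℝ) : Matrix (Fin d) (Fin d) ℝ :=
  Matrix.diagonal fun j => ε ^ (lvl A B j - 1)

/-- `V`: the `n × n` block matrix with `(k,l)`-block
`V_{kl} = (−1)^{l+1} u_k u_l* (k−1)!(l−1)!/(k+l−1)!`, written entrywise. -/
def Vmat {d m : ℕ} (A : Matrix (Fin d) (Fin d) ℝ) (B : Matrix (Fin d) (Fin m) ℝ)
    (e : Fin d → Fin d → ℝ) : Matrix (Fin d) (Fin d) ℝ :=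
  Matrix.of fun a b =>
    (-1 : ℝ) ^ (lvl A B b + 1) *
      ((Nat.factorial (lvl A B a - 1) * Nat.factorial (lvl A B b - 1) : ℝ) /
        Nat.factorial (lvl A B a + lvl A B b - 1)) *
      ∑ i : Fin m, uEnt A B e a i * uEnt A B e b i
/-!
Entrywise, `Û(t−s) Û(−s)*` at `(a, b)` is `(t−s)^p (−s)^q ⟨u_a, u_b⟩` with `p + 1`, `q + 1` the
levels of `a`, `b`. Substituting `s = t x` turns `∫₀ᵗ (t−s)^p (−s)^q ds` into
`(−1)^q t^{p+q+1} B(q+1, p+1) = (−1)^q t^{p+q+1} p! q! / (p+q+1)!`, and `t^{p+q+1}` is exactly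
the product of the diagonal entries `t^{p+1/2}`, `t^{q+1/2}` of `J_t`.
-/

theorem intervalIntegral_pow_mul_one_sub_pow (p q : ℕ) :
    ∫ s in (0:ℝ)..1, s ^ q * (1 - s) ^ p =
      (p.factorial * q.factorial : ℝ) / (p + q + 1).factorial := by
  have hGamma := Complex.Gamma_mul_Gamma_eq_betaIntegral
    (s := (q : ℂ) + 1) (t := (p : ℂ) + 1) (by simp; positivity) (by simp; positivity)
  have hbeta : Complex.betaIntegral ((q : ℂ) + 1) ((p : ℂ) + 1) =
      ((∫ s in (0:ℝ)..1, s ^ q * (1 - s) ^ p : ℝ) : ℂ) := by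
    rw [Complex.betaIntegral, ← intervalIntegral.integral_ofReal]
    refine intervalIntegral.integral_congr fun x _ => ?_
    simp only [add_sub_cancel_right, Complex.cpow_natCast]
    push_cast
    ring
  rw [hbeta, show (q : ℂ) + 1 + ((p : ℂ) + 1) = ((p + q + 1 : ℕ) : ℂ) + 1 by push_cast; ring,
    Complex.Gamma_nat_eq_factorial, Complex.Gamma_nat_eq_factorial,
    Complex.Gamma_nat_eq_factorial] at hGamma
  have hfact : ((p + q + 1).factorial : ℂ) ≠ 0 := Nat.cast_ne_zero.mpr (Nat.factorial_ne_zero _)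
  have hC : ((∫ s in (0:ℝ)..1, s ^ q * (1 - s) ^ p : ℝ) : ℂ) =
      (p.factorial * q.factorial : ℝ) / (p + q + 1).factorial := by
    field_simp at hGamma ⊢
    simp only [Complex.ofReal_mul, Complex.ofReal_natCast]
    linear_combination -hGamma
  exact_mod_cast hC

theorem intervalIntegral_sub_pow_mul_neg_pow (p q : ℕ) (t : ℝ) :
    ∫ s in (0:ℝ)..t, (t - s) ^ p * (-s) ^ q =
      (-1 : ℝ) ^ q * (p.factorial * q.factorial / (p + q + 1).factorial) * t ^ (p + q + 1) := by
  have hsubst := intervalIntegral.smul_integral_comp_mul_left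
    (fun s : ℝ => (t - s) ^ p * (-s) ^ q) t (a := 0) (b := 1)
  simp only [mul_zero, mul_one, smul_eq_mul] at hsubst
  have hfactor (x : ℝ) : (t - t * x) ^ p * (-(t * x)) ^ q =
      ((-1 : ℝ) ^ q * t ^ (p + q)) * (x ^ q * (1 - x) ^ p) := by
    rw [show t - t * x = t * (1 - x) by ring, show -(t * x) = -1 * (t * x) by ring,
      mul_pow, mul_pow, mul_pow, pow_add]
    ring
  rw [← hsubst, intervalIntegral.integral_congr fun x _ => hfactor x,
    intervalIntegral.integral_const_mul, intervalIntegral_pow_mul_one_sub_pow]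
  ring

section Kalman

variable {d m : ℕ} (A : Matrix (Fin d) (Fin d) ℝ) (B : Matrix (Fin d) (Fin m) ℝ)

theorem dk_zero : dk A B 0 = 0 := by
  have hbot : kalmanSpan d m A B 0 = ⊥ := by
    rw [kalmanSpan]
    convert Submodule.span_empty
    ext x
    simp
  simp [dk, hbot]

theorem dk_eq_of_kalmanSpan_eq_top {n : ℕ} (hK : kalmanSpan d m A B n = ⊤) : dk A B n = d := by
  rw [dk, hK, finrank_top, Module.finrank_fin_fun]

theorem one_le_lvl {n : ℕ} (hK : kalmanSpan d m A B n = ⊤) (j : Fin d) : 1 ≤ lvl A B j := by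
  have hne : {k : ℕ | (j : ℕ) < dk A B k}.Nonempty :=
    ⟨n, by simp [dk_eq_of_kalmanSpan_eq_top A B hK]⟩
  by_contra! hzero
  have hmem := Nat.sInf_mem hne
  rw [← lvl, Nat.lt_one_iff.mp hzero, Set.mem_ofPred_eq, dk_zero] at hmem
  exact Nat.not_lt_zero _ hmem

theorem Uhat_mul_transpose_Uhat_apply (e : Fin d → Fin d → ℝ) (r r' : ℝ) (a b : Fin d) :
    (Uhat A B e r * (Uhat A B e r')ᵀ) a b =
      r ^ (lvl A B a - 1) * r' ^ (lvl A B b - 1) * ∑ i, uEnt A B e a i * uEnt A B e b i := by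
  simp only [mul_apply, transpose_apply, Uhat, of_apply, Finset.mul_sum]
  exact Finset.sum_congr rfl fun i _ => by ring

theorem Jmat_mul_mul_Jmat_apply (M : Matrix (Fin d) (Fin d) ℝ) {t : ℝ} (ht : 0 ≤ t) {n : ℕ}
    (hK : kalmanSpan d m A B n = ⊤) (a b : Fin d) :
    (Jmat A B t * M * Jmat A B t) a b = t ^ (lvl A B a + lvl A B b - 1) * M a b := by
  have ha := one_le_lvl A B hK a
  have hb := one_le_lvl A B hK b
  have hexp : ((lvl A B a : ℝ) - 1 / 2) + ((lvl A B b : ℝ) - 1 / 2) =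
      ((lvl A B a + lvl A B b - 1 : ℕ) : ℝ) := by
    push_cast [Nat.cast_sub (by omega : 1 ≤ lvl A B a + lvl A B b)]
    ring
  have hexp_ne : ((lvl A B a : ℝ) - 1 / 2) + ((lvl A B b : ℝ) - 1 / 2) ≠ 0 := by
    rw [hexp, Nat.cast_ne_zero]
    omega
  simp only [Jmat, diagonal_mul, mul_diagonal]
  rw [← Real.rpow_natCast, ← hexp, Real.rpow_add' ht hexp_ne]
  ring

end Kalman

theorem integral_Uhat_eq_JVJ_general
    (d m : ℕ)
    (A : Matrix (Fin d) (Fin d) ℝ) (B : Matrix (Fin d) (Fin m) ℝ)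
    (n : ℕ) (hK : kalmanSpan d m A B n = ⊤)
    (e : Fin d → Fin d → ℝ) :
    ∀ t : ℝ, t ∈ Set.Icc (0:ℝ) 1 →
      (Matrix.of fun a b =>
          ∫ s in (0:ℝ)..t, (Uhat A B e (t - s) * (Uhat A B e (-s))ᵀ) a b) =
        Jmat A B t * Vmat A B e * Jmat A B t := by
  intro t ⟨ht0, _⟩
  ext a b
  obtain ⟨p, hp⟩ := Nat.exists_eq_add_of_le' (one_le_lvl A B hK a)
  obtain ⟨q, hq⟩ := Nat.exists_eq_add_of_le' (one_le_lvl A B hK b)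
  simp only [Matrix.of_apply, Uhat_mul_transpose_Uhat_apply, Jmat_mul_mul_Jmat_apply A B _ ht0 hK,
    intervalIntegral.integral_mul_const, Vmat, hp, hq, Nat.add_sub_cancel,
    intervalIntegral_sub_pow_mul_neg_pow, show p + 1 + (q + 1) - 1 = p + q + 1 by omega]
  ring

/-- For every `t ∈ [0,1]`, `∫₀ᵗ Û(t−s) Û(−s)* ds = J_t V J_t`. -/
theorem integral_Uhat_eq_JVJ
    (d m : ℕ) (hd : 0 < d) (hm : 0 < m)
    (A : Matrix (Fin d) (Fin d) ℝ) (B : Matrix (Fin d) (Fin m) ℝ)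
    (n : ℕ) (hK : kalmanSpan d m A B n = ⊤)
    (hmin : ∀ N : ℕ, kalmanSpan d m A B N = ⊤ → n ≤ N)
    (e : Fin d → Fin d → ℝ)
    (h_on : ∀ i j : Fin d, e i ⬝ᵥ e j = if i = j then (1:ℝ) else 0)
    (h_adapt : ∀ k : ℕ, 1 ≤ k → k ≤ n →
      kalmanSpan d m A B k =
        Submodule.span ℝ {x | ∃ j : Fin d, (j : ℕ) < dk A B k ∧ x = e j}) :
    ∀ t : ℝ, t ∈ Set.Icc (0:ℝ) 1 →
      (Matrix.of fun a b =>
          ∫ s in (0:ℝ)..t, (Uhat A B e (t - s) * (Uhat A B e (-s))ᵀ) a b) =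
        Jmat A B t * Vmat A B e * Jmat A B t :=
  integral_Uhat_eq_JVJ_general d m A B n hK e
end
end

section
/- The d×d matrix V whose (k,l)-block is V_{kl} = (−1)^{l+1} u_k u_l* (k−1)!(l−1)!/(k+l−1)! is invertible. -/
set_option maxHeartbeats 1000000
set_option synthInstance.maxHeartbeats 400000


open Matrix MeasureTheory

noncomputable section

/-! ### Auxiliary lemmas -/

open intervalIntegral in
lemma beta_nat : ∀ (q p : ℕ), ∫ s in (0:ℝ)..1, s ^ p * (s - 1) ^ q
    = (-1) ^ q * (Nat.factorial p * Nat.factorial q) / Nat.factorial (p + q + 1) := by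
  intro q
  induction q with
  | zero =>
    intro p
    simp only [pow_zero, mul_one, integral_pow]
    norm_num [Nat.factorial_succ]
    have : (p.factorial:ℝ) ≠ 0 := by positivity
    field_simp
  | succ q ih =>
    intro p
    have hu : ∀ s ∈ Set.uIcc (0:ℝ) 1, HasDerivAt (fun s : ℝ => (s-1)^(q+1))
        (((q:ℝ)+1) * (s-1)^q) s := by
      intro s _
      have := ((hasDerivAt_id s).sub_const 1).pow (q+1)
      simpa [Pi.pow_def] using this
    have hv : ∀ s ∈ Set.uIcc (0:ℝ) 1, HasDerivAt (fun s : ℝ => s^(p+1)/((p:ℝ)+1))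
        (s ^ p) s := by
      intro s _
      have : HasDerivAt (fun x : ℝ => x^(p+1)/((p:ℝ)+1)) (((p+1:ℕ):ℝ) * s^(p+1-1)/((p:ℝ)+1)) s :=
        (hasDerivAt_pow (p+1) s).div_const ((p:ℝ)+1)
      convert this using 1
      push_cast
      field_simp
    have key := integral_mul_deriv_eq_deriv_mul hu hv
      (by apply Continuous.intervalIntegrable; continuity)
      (by apply Continuous.intervalIntegrable; continuity)
    have h1 : (∫ s in (0:ℝ)..1, s ^ p * (s - 1) ^ (q+1))
        = ∫ s in (0:ℝ)..1, (s-1)^(q+1) * s ^ p := by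
      congr 1; funext s; ring
    have h2 : (∫ s in (0:ℝ)..1, (((q:ℝ)+1) * (s-1)^q) * (s^(p+1)/((p:ℝ)+1)))
        = (((q:ℝ)+1)/((p:ℝ)+1)) * ∫ s in (0:ℝ)..1, s^(p+1) * (s-1)^q := by
      rw [← intervalIntegral.integral_const_mul]
      congr 1; funext s; ring
    rw [h1, key, h2, ih (p+1)]
    norm_num
    have hp1 : ((p:ℝ)+1) ≠ 0 := by positivity
    have hf : ((p + (q+1) + 1).factorial : ℝ) ≠ 0 := by positivity
    field_simp
    push_cast [Nat.factorial_succ]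
    ring

lemma poly_eq_zero_of_integral_sq (p : Polynomial ℝ)
    (h : ∫ s in (0:ℝ)..1, (p.eval s)^2 = 0) : p = 0 := by
  by_contra hp
  have hcont : Continuous fun s : ℝ => (p.eval s)^2 := (p.continuous_aeval).pow 2
  have hae := (intervalIntegral.integral_eq_zero_iff_of_le_of_nonneg_ae (by norm_num)
    (Filter.Eventually.of_forall fun x => sq_nonneg _) (hcont.intervalIntegrable 0 1)).1 h
  have hfin : ({x : ℝ | Polynomial.IsRoot p x}).Finite := p.finite_setOf_isRoot hp
  have hms : MeasurableSet {x : ℝ | ¬ ((p.eval x)^2 = 0)} := by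
    have : MeasurableSet {x : ℝ | (p.eval x)^2 = 0} :=
      measurableSet_eq_fun hcont.measurable measurable_const
    exact this.compl
  have h0 : volume ({x : ℝ | ¬ ((p.eval x)^2 = 0)} ∩ Set.Ioc 0 1) = 0 := by
    have h2 := (MeasureTheory.ae_iff).1 hae
    simp only [Pi.zero_apply] at h2
    rwa [Measure.restrict_apply hms] at h2
  have hsub : Set.Ioc (0:ℝ) 1 ⊆
      {x : ℝ | Polynomial.IsRoot p x} ∪ ({x : ℝ | ¬ ((p.eval x)^2 = 0)} ∩ Set.Ioc 0 1) := by
    intro x hx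
    by_cases hr : p.IsRoot x
    · exact Or.inl hr
    · exact Or.inr ⟨by simpa [pow_eq_zero_iff] using hr, hx⟩
  have hle : volume (Set.Ioc (0:ℝ) 1) ≤ 0 := by
    calc volume (Set.Ioc (0:ℝ) 1)
        ≤ volume ({x : ℝ | Polynomial.IsRoot p x}) +
          volume ({x : ℝ | ¬ ((p.eval x)^2 = 0)} ∩ Set.Ioc 0 1) :=
          (measure_mono hsub).trans (measure_union_le _ _)
      _ = 0 := by rw [hfin.measure_zero, h0]; simp
  rw [Real.volume_Ioc] at hle
  simp at hle

lemma dual_span_exists {ι : Type*} [Fintype ι] {m : ℕ} (f : ι → (Fin m → ℝ)) (w : Fin m → ℝ)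
    (h : ∀ v : Fin m → ℝ, (∀ a, f a ⬝ᵥ v = 0) → w ⬝ᵥ v = 0) :
    ∃ c : ι → ℝ, w = ∑ a, c a • f a := by
  let f' : ι → EuclideanSpace ℝ (Fin m) := fun a => WithLp.toLp 2 (f a)
  let w' : EuclideanSpace ℝ (Fin m) := WithLp.toLp 2 w
  have key : w' ∈ Submodule.span ℝ (Set.range f') := by
    rw [← Submodule.orthogonal_orthogonal (Submodule.span ℝ (Set.range f'))]
    rw [Submodule.mem_orthogonal]
    intro v hv
    have hall : ∀ a, f a ⬝ᵥ v.ofLp = 0 := fun a => by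
      have := hv (f' a) (Submodule.subset_span ⟨a, rfl⟩)
      simpa [f', PiLp.inner_apply, RCLike.inner_apply, dotProduct, mul_comm] using this
    have h2 := h v.ofLp hall
    show (inner ℝ v w' : ℝ) = 0
    simp only [w', PiLp.inner_apply, RCLike.inner_apply, conj_trivial]
    simpa [dotProduct, mul_comm] using h2
  rw [Submodule.mem_span_range_iff_exists_fun] at key
  obtain ⟨c, hc⟩ := key
  have hc' := congrArg WithLp.ofLp hc
  simp [f', w'] at hc'
  exact ⟨c, hc'.symm⟩

/-- kernel of dotting with a fixed vector -/
def dotKer {d : ℕ} (w : Fin d → ℝ) : Submodule ℝ (Fin d → ℝ) where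
  carrier := {z | w ⬝ᵥ z = 0}
  add_mem' := by
    intro a b ha hb
    simp only [Set.mem_setOf_eq, dotProduct_add] at *
    rw [ha, hb, add_zero]
  zero_mem' := by simp
  smul_mem' := by
    intro c z hz
    simp only [Set.mem_setOf_eq, dotProduct_smul] at *
    rw [hz, smul_zero]

/-- The matrix `V` is invertible. -/
theorem Vmat_isUnit
    (d m : ℕ) (hd : 0 < d) (hm : 0 < m)
    (A : Matrix (Fin d) (Fin d) ℝ) (B : Matrix (Fin d) (Fin m) ℝ)
    (n : ℕ) (hK : kalmanSpan d m A B n = ⊤)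
    (hmin : ∀ N : ℕ, kalmanSpan d m A B N = ⊤ → n ≤ N)
    (e : Fin d → Fin d → ℝ)
    (h_on : ∀ i j : Fin d, e i ⬝ᵥ e j = if i = j then (1:ℝ) else 0)
    (h_adapt : ∀ k : ℕ, 1 ≤ k → k ≤ n →
      kalmanSpan d m A B k =
        Submodule.span ℝ {x | ∃ j : Fin d, (j : ℕ) < dk A B k ∧ x = e j}) :
    IsUnit (Vmat A B e) := by
  classical
  set κ : Fin d → ℕ := lvl A B with hκdef
  set u : Fin d → Fin m → ℝ := uEnt A B e with hudef
  set E : ℕ → Submodule ℝ (Fin d → ℝ) := kalmanSpan d m A B with hEdef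
  -- basic facts
  have hE0 : E 0 = ⊥ := by
    rw [hEdef]
    unfold kalmanSpan
    convert Submodule.span_empty
    simp
  have hEmono : Monotone E := by
    intro k l hkl
    apply Submodule.span_mono
    rintro x ⟨l', hl', v, rfl⟩
    exact ⟨l', lt_of_lt_of_le hl' hkl, v, rfl⟩
  have hgen : ∀ (k l : ℕ) (v : Fin m → ℝ), l < k → (A ^ l * B).mulVec v ∈ E k :=
    fun k l v hl => Submodule.subset_span ⟨l, hl, v, rfl⟩
  have hAmap : ∀ k, ∀ x ∈ E k, A.mulVec x ∈ E (k+1) := by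
    intro k x hx
    induction hx using Submodule.span_induction with
    | mem x hx =>
      obtain ⟨l, hl, v, rfl⟩ := hx
      rw [Matrix.mulVec_mulVec, ← Matrix.mul_assoc, ← pow_succ']
      exact hgen (k+1) (l+1) v (by omega)
    | zero => rw [Matrix.mulVec_zero]; exact Submodule.zero_mem _
    | add x y _ _ hx hy => rw [Matrix.mulVec_add]; exact Submodule.add_mem _ hx hy
    | smul c x _ hx => rw [Matrix.mulVec_smul]; exact Submodule.smul_mem _ _ hx
  have hdk_mono : Monotone (dk A B) := fun k l hkl => Submodule.finrank_mono (hEmono hkl)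
  have hdkn : dk A B n = d := by
    unfold dk
    rw [← hEdef, hK, finrank_top]
    exact Module.finrank_fin_fun ℝ
  have hdk0 : dk A B 0 = 0 := by
    unfold dk
    rw [← hEdef, hE0, finrank_bot]
  have hκ_lt : ∀ j : Fin d, (j:ℕ) < dk A B (κ j) := by
    intro j
    have : sInf {k : ℕ | (j : ℕ) < dk A B k} ∈ {k : ℕ | (j : ℕ) < dk A B k} :=
      Nat.sInf_mem ⟨n, by simp only [Set.mem_setOf_eq, hdkn]; exact j.isLt⟩
    exact this
  have hκ_le_of_lt : ∀ (j : Fin d) (k : ℕ), (j:ℕ) < dk A B k → κ j ≤ k :=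
    fun j k hk => Nat.sInf_le hk
  have hκ_le : ∀ j : Fin d, κ j ≤ n :=
    fun j => hκ_le_of_lt j n (by rw [hdkn]; exact j.isLt)
  have hκ_pos : ∀ j : Fin d, 1 ≤ κ j := by
    intro j
    by_contra h
    have h0 : κ j = 0 := by omega
    have := hκ_lt j
    rw [h0, hdk0] at this
    omega
  have hdk_κ : ∀ j : Fin d, dk A B (κ j - 1) ≤ (j:ℕ) := by
    intro j
    by_contra h
    push_neg at h
    have := hκ_le_of_lt j (κ j - 1) h
    have := hκ_pos j
    omega
  -- dot product helpers
  have hdot_mulVec : ∀ (w : Fin d → ℝ) (M : Matrix (Fin d) (Fin m) ℝ) (v : Fin m → ℝ),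
      w ⬝ᵥ M.mulVec v = ∑ i, (w ⬝ᵥ fun a => M a i) * v i := by
    intro w M v
    simp only [dotProduct, Matrix.mulVec, Finset.mul_sum, Finset.sum_mul]
    rw [Finset.sum_comm]
    apply Finset.sum_congr rfl
    intro i _
    apply Finset.sum_congr rfl
    intro a _
    ring
  have hfact_ne : ∀ k : ℕ, ((Nat.factorial k : ℝ)) ≠ 0 := fun k => by positivity
  have hu_eq : ∀ (j : Fin d) (i : Fin m),
      (e j ⬝ᵥ fun a => (A ^ (κ j - 1) * B) a i) = (κ j - 1).factorial * u j i := by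
    intro j i
    rw [hudef]
    unfold uEnt
    rw [← hκdef]
    field_simp
  have he_dot_pow : ∀ (j : Fin d) (v : Fin m → ℝ),
      e j ⬝ᵥ (A ^ (κ j - 1) * B).mulVec v = (κ j - 1).factorial * ∑ i, u j i * v i := by
    intro j v
    rw [hdot_mulVec, Finset.mul_sum]
    apply Finset.sum_congr rfl
    intro i _
    rw [hu_eq j i]
    ring
  have he_mem : ∀ j : Fin d, e j ∈ E (κ j) := by
    intro j
    rw [h_adapt (κ j) (hκ_pos j) (hκ_le j)]
    exact Submodule.subset_span ⟨j, hκ_lt j, rfl⟩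
  have he_orthE : ∀ j : Fin d, E (κ j - 1) ≤ dotKer (e j) := by
    intro j
    by_cases h1 : κ j = 1
    · rw [h1]
      norm_num
      rw [hE0]
      exact bot_le
    · have hk1 : 1 ≤ κ j - 1 := by have := hκ_pos j; omega
      have hkn : κ j - 1 ≤ n := by have := hκ_le j; omega
      rw [h_adapt _ hk1 hkn]
      apply Submodule.span_le.2
      rintro x ⟨i, hi, rfl⟩
      have hij : i ≠ j := by
        intro h
        rw [h] at hi
        have := hdk_κ j
        omega
      show e j ⬝ᵥ e i = 0
      rw [h_on j i, if_neg (fun h => hij h.symm)]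
  have hdot_sum : ∀ (z : Fin d → ℝ) (f : Fin d → Fin d → ℝ) (c : Fin d → ℝ),
      z ⬝ᵥ (∑ b, c b • f b) = ∑ b, c b * (z ⬝ᵥ f b) := by
    intro z f c
    simp only [dotProduct, Finset.sum_apply, Pi.smul_apply, smul_eq_mul, Finset.mul_sum]
    rw [Finset.sum_comm]
    apply Finset.sum_congr rfl
    intro b _
    apply Finset.sum_congr rfl
    intro a _
    ring
  have hdot_sum' : ∀ (z : Fin d → ℝ) (f : Fin d → Fin d → ℝ) (c : Fin d → ℝ),
      (∑ b, c b • f b) ⬝ᵥ z = ∑ b, c b * (f b ⬝ᵥ z) := by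
    intro z f c
    rw [dotProduct_comm, hdot_sum]
    apply Finset.sum_congr rfl
    intro b _
    rw [dotProduct_comm]
  -- Lemma C : rows within one level are linearly independent
  have lemC : ∀ (k : ℕ), 1 ≤ k → k ≤ n → ∀ c : Fin d → ℝ,
      (∀ b, κ b ≠ k → c b = 0) → (∀ i : Fin m, (∑ b, c b * u b i) = 0) → ∀ b, c b = 0 := by
    intro k hk1 hkn c hc0 hcu
    set w : Fin d → ℝ := ∑ b, c b • e b with hw
    have hwE : w ∈ E k := by
      apply Submodule.sum_mem
      intro b _
      by_cases hb : κ b = k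
      · exact Submodule.smul_mem _ _ (hb ▸ he_mem b)
      · rw [hc0 b hb, zero_smul]
        exact Submodule.zero_mem _
    have hworth : E k ≤ dotKer w := by
      apply Submodule.span_le.2
      rintro z ⟨l, hl, v, rfl⟩
      show w ⬝ᵥ _ = 0
      rw [hw, hdot_sum']
      rcases Nat.lt_or_ge l (k-1) with hlk | hlk
      · apply Finset.sum_eq_zero
        intro b _
        by_cases hb : κ b = k
        · have hmem : (A ^ l * B).mulVec v ∈ E (κ b - 1) := by
            apply hgen
            omega
          have := he_orthE b hmem
          rw [this, mul_zero]
        · rw [hc0 b hb, zero_mul]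
      · have hl' : l = k - 1 := by omega
        subst hl'
        have hterm : ∀ b : Fin d, c b * (e b ⬝ᵥ (A ^ (k-1) * B).mulVec v)
            = ((k-1).factorial : ℝ) * ∑ i, (c b * u b i) * v i := by
          intro b
          by_cases hb : κ b = k
          · rw [show (A : Matrix (Fin d) (Fin d) ℝ) ^ (k-1) = A ^ (κ b - 1) from by rw [hb]]
            rw [he_dot_pow b v, hb]
            simp only [Finset.mul_sum]
            apply Finset.sum_congr rfl
            intro i _
            ring
          · rw [hc0 b hb]
            simp
        rw [Finset.sum_congr rfl (fun b _ => hterm b)]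
        rw [← Finset.mul_sum, Finset.sum_comm]
        have : ∀ i : Fin m, (∑ b, (c b * u b i) * v i) = 0 := by
          intro i
          rw [← Finset.sum_mul, hcu i, zero_mul]
        rw [Finset.sum_congr rfl (fun i _ => this i), Finset.sum_const_zero, mul_zero]
    have hww : w ⬝ᵥ w = 0 := hworth hwE
    have hw2 : w ⬝ᵥ w = ∑ b, (c b)^2 := by
      nth_rewrite 1 [hw]
      rw [hdot_sum']
      apply Finset.sum_congr rfl
      intro b _
      have : e b ⬝ᵥ w = c b := by
        rw [hw, hdot_sum]
        rw [Finset.sum_eq_single b]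
        · rw [h_on b b, if_pos rfl, mul_one]
        · intro b' _ hb'
          rw [h_on b b', if_neg (fun h => hb' h.symm), mul_zero]
        · intro h
          exact absurd (Finset.mem_univ b) h
      rw [this]
      ring
    rw [hw2] at hww
    intro b
    have := (Finset.sum_eq_zero_iff_of_nonneg (fun b _ => sq_nonneg (c b))).1 hww b
      (Finset.mem_univ b)
    exact pow_eq_zero_iff (by norm_num) |>.1 this
  -- Lemma D : row spaces are decreasing
  have lemD : ∀ (b : Fin d) (k : ℕ), 1 ≤ k → k ≤ κ b →
      ∃ c : Fin d → ℝ, u b = ∑ a, c a • (if κ a = k then u a else 0) := by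
    intro b k hk1 hkb
    apply dual_span_exists
    intro v hv
    have hva : ∀ a : Fin d, κ a = k → u a ⬝ᵥ v = 0 := by
      intro a ha
      have := hv a
      rwa [if_pos ha] at this
    have hkn : k ≤ n := le_trans hkb (hκ_le b)
    have hzEk : (A ^ (k-1) * B).mulVec v ∈ E k := hgen k (k-1) v (by omega)
    rw [h_adapt k hk1 hkn] at hzEk
    set g : Fin d → (Fin d → ℝ) := fun j => if (j:ℕ) < dk A B k then e j else 0 with hg
    have hspan : Submodule.span ℝ {x | ∃ j : Fin d, (j:ℕ) < dk A B k ∧ x = e j}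
        = Submodule.span ℝ (Set.range g) := by
      apply le_antisymm
      · apply Submodule.span_le.2
        rintro x ⟨j, hj, rfl⟩
        apply Submodule.subset_span
        exact ⟨j, by rw [hg]; simp only [hj, if_pos]⟩
      · apply Submodule.span_le.2
        rintro x ⟨j, rfl⟩
        by_cases hj : (j:ℕ) < dk A B k
        · rw [hg]
          simp only [hj, if_pos]
          exact Submodule.subset_span ⟨j, hj, rfl⟩
        · rw [hg]
          simp only [hj, if_false]
          exact Submodule.zero_mem _
    rw [hspan, Submodule.mem_span_range_iff_exists_fun] at hzEk
    obtain ⟨c, hc⟩ := hzEk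
    have hcoef : ∀ a : Fin d, κ a = k → c a = 0 := by
      intro a ha
      have ha' : (a:ℕ) < dk A B k := by rw [← ha]; exact hκ_lt a
      have h1 : e a ⬝ᵥ (A ^ (k-1) * B).mulVec v = c a := by
        rw [← hc, hdot_sum]
        rw [Finset.sum_eq_single a]
        · rw [hg]
          simp only [ha', if_pos]
          rw [h_on a a, if_pos rfl, mul_one]
        · intro j _ hj
          rw [hg]
          by_cases hjk : (j:ℕ) < dk A B k
          · simp only [hjk, if_pos]
            rw [h_on a j, if_neg (fun h => hj h.symm), mul_zero]
          · simp only [hjk, if_false]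
            rw [dotProduct_zero, mul_zero]
        · intro h
          exact absurd (Finset.mem_univ a) h
      have h2 : e a ⬝ᵥ (A ^ (k-1) * B).mulVec v = 0 := by
        rw [show (A : Matrix (Fin d) (Fin d) ℝ) ^ (k-1) = A ^ (κ a - 1) from by rw [ha]]
        rw [he_dot_pow a v]
        have : (∑ i, u a i * v i) = u a ⬝ᵥ v := rfl
        rw [this, hva a ha, mul_zero]
      rw [h1] at h2
      exact h2.symm ▸ rfl
    have hzE1 : (A ^ (k-1) * B).mulVec v ∈ E (k-1) := by
      rw [← hc]
      apply Submodule.sum_mem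
      intro j _
      by_cases hj : (j:ℕ) < dk A B k
      · by_cases hjk : κ j = k
        · rw [hcoef j hjk, zero_smul]
          exact Submodule.zero_mem _
        · have hle : κ j ≤ k - 1 := by
            have := hκ_le_of_lt j k hj
            omega
          apply Submodule.smul_mem
          rw [hg]
          simp only [hj, if_pos]
          exact hEmono hle (he_mem j)
      · rw [hg]
        simp only [hj, if_false, smul_zero]
        exact Submodule.zero_mem _
    have hstep : ∀ r, k - 1 ≤ r → (A ^ r * B).mulVec v ∈ E r := by
      intro r hr
      induction r, hr using Nat.le_induction with
      | base => exact hzE1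
      | succ r hr ih =>
        have := hAmap r _ ih
        rwa [Matrix.mulVec_mulVec, ← Matrix.mul_assoc, ← pow_succ'] at this
    have hfin : (A ^ (κ b - 1) * B).mulVec v ∈ E (κ b - 1) := hstep (κ b - 1) (by omega)
    have h3 : e b ⬝ᵥ (A ^ (κ b - 1) * B).mulVec v = 0 := he_orthE b hfin
    rw [he_dot_pow b v] at h3
    have : (∑ i, u b i * v i) = 0 := by
      rcases mul_eq_zero.1 h3 with h | h
      · exact absurd h (hfact_ne _)
      · exact h
    exact this
  -- reduce to injectivity of mulVec
  rw [← Matrix.mulVec_injective_iff_isUnit]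
  have key : ∀ x : Fin d → ℝ, (Vmat A B e).mulVec x = 0 → x = 0 := by
    intro x hx0
    set Q : Fin m → Polynomial ℝ :=
      fun i => ∑ b, Polynomial.C (x b * u b i) * (Polynomial.X - 1) ^ (κ b - 1) with hQ
    have hQeval : ∀ (i : Fin m) (s : ℝ),
        (Q i).eval s = ∑ b, x b * u b i * (s - 1)^(κ b - 1) := by
      intro i s
      rw [hQ]
      simp [Polynomial.eval_finset_sum]
    -- representation of Q in terms of the monomials X^(κ a - 1)
    set G : Fin d → (Fin m → Polynomial ℝ) :=
      fun a => fun i => Polynomial.C (u a i) * Polynomial.X ^ (κ a - 1) with hG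
    set H : Fin d → (Fin m → Polynomial ℝ) :=
      fun b => fun i => Polynomial.C (u b i) * (Polynomial.X - 1) ^ (κ b - 1) with hH
    have hrep : ∃ y : Fin d → ℝ, ∀ i,
        Q i = ∑ a, Polynomial.C (y a * u a i) * Polynomial.X ^ (κ a - 1) := by
      have hmem : (fun i => Q i) ∈ Submodule.span ℝ (Set.range G) := by
        have hQsum : (fun i => Q i) = ∑ b, x b • H b := by
          funext i
          rw [Finset.sum_apply, hQ]
          apply Finset.sum_congr rfl
          intro b _
          rw [Pi.smul_apply, hH, Polynomial.smul_eq_C_mul, _root_.map_mul, mul_assoc]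
        rw [hQsum]
        apply Submodule.sum_mem
        intro b _
        apply Submodule.smul_mem
        have hexp : H b = ∑ j ∈ Finset.range (κ b - 1 + 1),
            ((-1:ℝ)^(j + (κ b - 1)) * ((κ b - 1).choose j : ℝ)) •
              ((fun i : Fin m => Polynomial.C (u b i) * Polynomial.X ^ j) : Fin m → Polynomial ℝ) := by
          funext i
          rw [Finset.sum_apply, hH]
          show Polynomial.C (u b i) * (Polynomial.X - 1) ^ (κ b - 1) = _
          rw [sub_pow, Finset.mul_sum]
          apply Finset.sum_congr rfl
          intro j _
          rw [Pi.smul_apply, Polynomial.smul_eq_C_mul]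
          simp only [_root_.map_mul, _root_.map_pow, _root_.map_neg, _root_.map_one,
            Polynomial.C_eq_natCast]
          push_cast
          ring
        rw [hexp]
        apply Submodule.sum_mem
        intro j hj
        apply Submodule.smul_mem
        have hj' : j + 1 ≤ κ b := by
          simp only [Finset.mem_range] at hj
          have := hκ_pos b
          omega
        obtain ⟨c, hcb⟩ := lemD b (j+1) (by omega) hj'
        have hfe : ((fun i : Fin m => Polynomial.C (u b i) * Polynomial.X ^ j) : Fin m → Polynomial ℝ)
            = ∑ a, c a • (if κ a = j + 1 then G a else 0) := by
          funext i
          rw [Finset.sum_apply]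
          have hub : u b i = ∑ a, c a * (if κ a = j+1 then u a i else 0) := by
            have h5 := congrFun hcb i
            rw [Finset.sum_apply] at h5
            rw [h5]
            apply Finset.sum_congr rfl
            intro a _
            rw [Pi.smul_apply, smul_eq_mul, apply_ite (fun f : Fin m → ℝ => f i)]
            rfl
          show Polynomial.C (u b i) * Polynomial.X ^ j = _
          rw [hub, _root_.map_sum, Finset.sum_mul]
          apply Finset.sum_congr rfl
          intro a _
          by_cases ha : κ a = j+1
          · simp only [if_pos ha, Pi.smul_apply, hG, Polynomial.smul_eq_C_mul, _root_.map_mul]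
            rw [show κ a - 1 = j from by omega]
            ring
          · simp [if_neg ha]
        rw [hfe]
        apply Submodule.sum_mem
        intro a _
        apply Submodule.smul_mem
        by_cases ha : κ a = j+1
        · rw [if_pos ha]
          exact Submodule.subset_span ⟨a, rfl⟩
        · rw [if_neg ha]
          exact Submodule.zero_mem _
      rw [Submodule.mem_span_range_iff_exists_fun] at hmem
      obtain ⟨y, hy⟩ := hmem
      refine ⟨y, fun i => ?_⟩
      have h6 := congrFun hy.symm i
      rw [Finset.sum_apply] at h6
      rw [h6]
      apply Finset.sum_congr rfl
      intro a _
      rw [Pi.smul_apply, hG, Polynomial.smul_eq_C_mul, _root_.map_mul, mul_assoc]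
    obtain ⟨y, hy⟩ := hrep
    have hQeval2 : ∀ (i : Fin m) (s : ℝ),
        (Q i).eval s = ∑ a, y a * u a i * s^(κ a - 1) := by
      intro i s
      rw [hy i]
      simp [Polynomial.eval_finset_sum]
    -- the integral identity: column a of V x as an integral
    have hcont : ∀ i, Continuous fun s : ℝ => (Q i).eval s := fun i => (Q i).continuous_aeval
    have hInt : ∀ a : Fin d,
        (∫ s in (0:ℝ)..1, s^(κ a - 1) * ∑ i, u a i * (Q i).eval s)
          = ((Vmat A B e).mulVec x) a := by
      intro a
      have hpt : ∀ s : ℝ, s^(κ a - 1) * ∑ i, u a i * (Q i).eval s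
          = ∑ b, (x b * ∑ i, u a i * u b i) * (s ^ (κ a - 1) * (s-1)^(κ b - 1)) := by
        intro s
        simp only [hQeval, Finset.mul_sum, Finset.sum_mul]
        rw [Finset.sum_comm]
        apply Finset.sum_congr rfl
        intro b _
        apply Finset.sum_congr rfl
        intro i _
        ring
      rw [intervalIntegral.integral_congr (g := fun s =>
        ∑ b, (x b * ∑ i, u a i * u b i) * (s ^ (κ a - 1) * (s-1)^(κ b - 1)))
        (fun s _ => hpt s)]
      rw [intervalIntegral.integral_finset_sum (fun b _ => by
        apply Continuous.intervalIntegrable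
        continuity)]
      simp only [intervalIntegral.integral_const_mul, beta_nat]
      have hV : ∀ b : Fin d, ((Vmat A B e).mulVec x) a = ∑ b, Vmat A B e a b * x b := by
        intro b
        rfl
      rw [hV a]
      apply Finset.sum_congr rfl
      intro b _
      have hVab : Vmat A B e a b = (-1 : ℝ) ^ (κ b + 1) *
          ((Nat.factorial (κ a - 1) * Nat.factorial (κ b - 1) : ℝ) /
            Nat.factorial (κ a + κ b - 1)) * ∑ i, u a i * u b i := rfl
      rw [hVab]
      rw [show (κ a - 1) + (κ b - 1) + 1 = κ a + κ b - 1 from by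
        have := hκ_pos a; have := hκ_pos b; omega]
      rw [show κ b + 1 = (κ b - 1) + 2 from by have := hκ_pos b; omega, pow_add]
      norm_num
      ring
    -- summing against y gives the integral of the sum of squares
    have hVx : ∀ a : Fin d, ((Vmat A B e).mulVec x) a = 0 := fun a => by rw [hx0]; rfl
    have hpt2 : ∀ s : ℝ, (∑ i, ((Q i).eval s)^2)
        = ∑ a, y a * (s^(κ a - 1) * ∑ i, u a i * (Q i).eval s) := by
      intro s
      have hsq : ∀ i : Fin m, ((Q i).eval s)^2
          = ∑ a, y a * (s^(κ a - 1) * (u a i * (Q i).eval s)) := by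
        intro i
        rw [pow_two]
        nth_rewrite 1 [hQeval2 i s]
        rw [Finset.sum_mul]
        apply Finset.sum_congr rfl
        intro a _
        ring
      rw [Finset.sum_congr rfl (fun i _ => hsq i), Finset.sum_comm]
      apply Finset.sum_congr rfl
      intro a _
      simp only [Finset.mul_sum]
    have hzero : (∑ i, ∫ s in (0:ℝ)..1, ((Q i).eval s)^2) = 0 := by
      rw [← intervalIntegral.integral_finset_sum (fun i _ => by
        apply Continuous.intervalIntegrable
        exact (hcont i).pow 2)]
      rw [intervalIntegral.integral_congr (g := fun s =>
        ∑ a, y a * (s^(κ a - 1) * ∑ i, u a i * (Q i).eval s)) (fun s _ => hpt2 s)]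
      rw [intervalIntegral.integral_finset_sum (fun a _ => by
        apply Continuous.intervalIntegrable
        apply Continuous.mul continuous_const
        apply Continuous.mul (continuous_pow _)
        apply continuous_finset_sum
        intro i _
        exact continuous_const.mul (hcont i))]
      simp only [intervalIntegral.integral_const_mul]
      have : ∀ a : Fin d, (∫ s in (0:ℝ)..1, s^(κ a - 1) * ∑ i, u a i * (Q i).eval s) = 0 := by
        intro a
        rw [hInt a]
        exact hVx a
      simp [this]
    have hQzero : ∀ i : Fin m, Q i = 0 := by
      intro i
      apply poly_eq_zero_of_integral_sq
      have hnn : ∀ j ∈ Finset.univ, (0:ℝ) ≤ ∫ s in (0:ℝ)..1, ((Q j).eval s)^2 := by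
        intro j _
        apply intervalIntegral.integral_nonneg (by norm_num)
        intro s _
        exact sq_nonneg _
      exact (Finset.sum_eq_zero_iff_of_nonneg hnn).1 hzero i (Finset.mem_univ i)
    -- extract the coefficients
    funext b0
    show x b0 = 0
    have hcoeff : ∀ i : Fin m, (∑ b, (if κ b = κ b0 then x b else 0) * u b i) = 0 := by
      intro i
      have hcomp : (Q i).comp (Polynomial.X + 1)
          = ∑ b, Polynomial.C (x b * u b i) * Polynomial.X ^ (κ b - 1) := by
        rw [hQ]
        show (∑ b, Polynomial.C (x b * u b i) * (Polynomial.X - 1) ^ (κ b - 1)).comp _ = _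
        rw [Polynomial.sum_comp]
        apply Finset.sum_congr rfl
        intro b _
        rw [Polynomial.mul_comp, Polynomial.pow_comp, Polynomial.sub_comp, Polynomial.X_comp,
          Polynomial.one_comp, Polynomial.C_comp, add_sub_cancel_right]
      have h0 : (Q i).comp (Polynomial.X + 1) = 0 := by
        rw [hQzero i, Polynomial.zero_comp]
      rw [hcomp] at h0
      have hco := congrArg (fun p => Polynomial.coeff p (κ b0 - 1)) h0
      simp only [Polynomial.finset_sum_coeff, Polynomial.coeff_C_mul, Polynomial.coeff_X_pow,
        Polynomial.coeff_zero] at hco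
      calc (∑ b, (if κ b = κ b0 then x b else 0) * u b i)
          = ∑ b, x b * u b i * (if κ b0 - 1 = κ b - 1 then (1:ℝ) else 0) := by
            apply Finset.sum_congr rfl
            intro b _
            by_cases hb : κ b = κ b0
            · rw [if_pos hb, if_pos (by omega : κ b0 - 1 = κ b - 1), mul_one]
            · rw [if_neg hb, if_neg (by have := hκ_pos b; have := hκ_pos b0; omega :
                ¬ (κ b0 - 1 = κ b - 1)), mul_zero, zero_mul]
        _ = 0 := hco
    have := lemC (κ b0) (hκ_pos b0) (hκ_le b0)
      (fun b => if κ b = κ b0 then x b else 0)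
      (fun b hb => if_neg hb) hcoeff b0
    simpa using this
  intro x₁ x₂ hx
  have := key (x₁ - x₂) (by rw [Matrix.mulVec_sub, hx, sub_self])
  exact sub_eq_zero.1 this
end
end

section
/- Let A = [[−1,0],[1,0]] and B = (1,0)ᵀ (Ornstein–Uhlenbeck process paired with its area). Then for all ε > 0 and r ∈ ℝ, exp(εrA) = [[e^{−εr}, 0],[1−e^{−εr}, 1]]; for all ε > 0 and t ∈ [0,1], Γ_1^ε is invertible and the matrix α_t^ε := exp(εtA) Γ_t^ε (Γ_1^ε)^{−1} exp(−εA) has entries (α_t^ε)_{11} = (1−e^{−εt})((ε−1)e^{ε(1+t)} + e^{εt} + (ε+1)e^{ε} − e^{2ε}) / ((e^{ε}−1)((ε−2)e^{ε}+ε+2)), (α_t^ε)_{12} = (e^{−ε} − e^{−ε(1−t)} − e^{−εt} + 1) / ((ε+2)e^{−ε}+ε−2), (α_t^ε)_{21} = (e^{2ε} − 1 + (ε+1)e^{ε(1−t)} + e^{εt} + (ε−1)e^{ε(1+t)} − εt(e^{ε}−1)² − 2εe^{ε} − e^{ε(2−t)}) / ((e^{ε}−1)((ε−2)e^{ε}+ε+2)),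 and (α_t^ε)_{22} = (e^{−εt} − e^{−ε(1−t)} + (εt+1)e^{−ε} + εt − 1) / ((ε+2)e^{−ε}+ε−2). -/
open Matrix MeasureTheory

noncomputable section

/-- `Γ_t^ε = ∫₀ᵗ exp(−εsA) B B* exp(−εsA*) ds`, defined entrywise. -/
def Gamma {d m : ℕ} (A : Matrix (Fin d) (Fin d) ℝ) (B : Matrix (Fin d) (Fin m) ℝ)
    (ε t : ℝ) : Matrix (Fin d) (Fin d) ℝ :=
  Matrix.of fun i j => ∫ s in (0:ℝ)..t,
    (NormedSpace.exp ((-(ε * s)) • A) * B * Bᵀ * NormedSpace.exp ((-(ε * s)) • Aᵀ)) i j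

/-- `α_t^ε = exp(εtA) Γ_t^ε (Γ_1^ε)⁻¹ exp(−εA)`. -/
def alphaMat {d m : ℕ} (A : Matrix (Fin d) (Fin d) ℝ) (B : Matrix (Fin d) (Fin m) ℝ)
    (ε t : ℝ) : Matrix (Fin d) (Fin d) ℝ :=
  NormedSpace.exp ((ε * t) • A) * Gamma A B ε t * (Gamma A B ε 1)⁻¹ *
    NormedSpace.exp ((-ε) • A)

/-!
`P := -A` is idempotent, so `exp (c • A) = (1 - P) + e^{-c} • P`. Hence
`exp (-ε s A) B = w₀ + e^{ε s} w₁` with `w₀ = (1 - P) B`, `w₁ = P B`, and the integrand of `Γ` is a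
quadratic polynomial in `e^{ε s}` with matrix coefficients, which integrates in closed form.
For this `A`, `B` one finds `det Γ_1^ε = (e^ε - 1) ((ε - 2) e^ε + ε + 2) / (2 ε²)`; the second factor
vanishes at `ε = 0` and has derivative `(ε - 1) e^ε + 1 > 0`, so `Γ_1^ε` is invertible for `ε > 0`,
and the entries of `α_t^ε` are rational functions of `e^ε` and `e^{ε t}`.
-/

theorem NormedSpace.exp_smul_of_isIdempotentElem {𝔸 : Type*} [Ring 𝔸] [Algebra ℝ 𝔸]
    [TopologicalSpace 𝔸] [IsTopologicalRing 𝔸] [ContinuousSMul ℝ 𝔸] [T2Space 𝔸]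
    {P : 𝔸} (hP : IsIdempotentElem P) (c : ℝ) :
    NormedSpace.exp (c • P) = 1 - P + Real.exp c • P := by
  have hterm : ∀ n : ℕ, ((n.factorial : ℝ)⁻¹ • (c • P) ^ n) =
      (if n = 0 then 1 - P else 0) + ((n.factorial : ℝ)⁻¹ * c ^ n) • P := by
    rintro (_ | n)
    · simp
    · rw [smul_pow, hP.pow_succ_eq, smul_smul, if_neg n.succ_ne_zero, zero_add]
  have hreal : HasSum (fun n : ℕ => (n.factorial : ℝ)⁻¹ * c ^ n) (Real.exp c) := by
    simpa [Real.exp_eq_exp_ℝ] using NormedSpace.exp_series_hasSum_exp' (𝕂 := ℝ) c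
  rw [NormedSpace.exp_eq_tsum ℝ]
  simp_rw [hterm]
  exact ((hasSum_ite_eq 0 (1 - P)).add (hreal.smul_const P)).tsum_eq

theorem integral_add_exp_mul_add_exp_sq_mul {c : ℝ} (hc : c ≠ 0) (p q r t : ℝ) :
    ∫ s in (0:ℝ)..t, (p + Real.exp (c * s) * q + Real.exp (c * s) ^ 2 * r) =
      t * p + (Real.exp (c * t) - 1) / c * q + (Real.exp (c * t) ^ 2 - 1) / (2 * c) * r := by
  have hderiv : ∀ s, HasDerivAt
      (fun s => s * p + Real.exp (c * s) / c * q + Real.exp (c * s) ^ 2 / (2 * c) * r)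
      (p + Real.exp (c * s) * q + Real.exp (c * s) ^ 2 * r) s := by
    intro s
    have hexp : HasDerivAt (fun s => Real.exp (c * s)) (Real.exp (c * s) * c) s := by
      simpa using ((hasDerivAt_id' s).const_mul c).exp
    refine ((((hasDerivAt_id' s).mul_const p).add ((hexp.div_const c).mul_const q)).add
      (((hexp.pow 2).div_const (2 * c)).mul_const r)).congr_deriv ?_
    field_simp
    ring
  rw [intervalIntegral.integral_eq_sub_of_hasDerivAt (fun s _ => hderiv s)
    (by apply Continuous.intervalIntegrable; fun_prop)]
  simp
  ring

theorem Gamma_neg_of_isIdempotentElem {d m : ℕ} {P : Matrix (Fin d) (Fin d) ℝ}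
    (hP : IsIdempotentElem P) (B : Matrix (Fin d) (Fin m) ℝ) {ε : ℝ} (hε : ε ≠ 0) (t : ℝ) :
    Gamma (-P) B ε t =
      t • ((1 - P) * B * ((1 - P) * B)ᵀ) +
        ((Real.exp (ε * t) - 1) / ε) • ((1 - P) * B * (P * B)ᵀ + P * B * ((1 - P) * B)ᵀ) +
        ((Real.exp (ε * t) ^ 2 - 1) / (2 * ε)) • (P * B * (P * B)ᵀ) := by
  have hintegrand : ∀ s : ℝ,
      NormedSpace.exp ((-(ε * s)) • -P) * B * Bᵀ * NormedSpace.exp ((-(ε * s)) • (-P)ᵀ) =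
        (1 - P) * B * ((1 - P) * B)ᵀ +
          Real.exp (ε * s) • ((1 - P) * B * (P * B)ᵀ + P * B * ((1 - P) * B)ᵀ) +
          Real.exp (ε * s) ^ 2 • (P * B * (P * B)ᵀ) := by
    intro s
    rw [← transpose_smul, exp_transpose, neg_smul_neg,
      NormedSpace.exp_smul_of_isIdempotentElem hP]
    simp only [transpose_add, transpose_smul, transpose_mul, add_mul, mul_add, smul_mul_assoc,
      mul_smul_comm, Matrix.mul_assoc, smul_add, smul_smul, pow_two]
    abel
  ext i j
  simp only [Gamma, of_apply, hintegrand, Matrix.add_apply, Matrix.smul_apply, smul_eq_mul]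
  exact integral_add_exp_mul_add_exp_sq_mul hε _ _ _ t

local notation "A₀" => (!![-1, 0; 1, 0] : Matrix (Fin 2) (Fin 2) ℝ)
local notation "B₀" => (!![1; 0] : Matrix (Fin 2) (Fin 1) ℝ)

theorem isIdempotentElem_neg_ouDrift : IsIdempotentElem (-A₀) := by
  rw [IsIdempotentElem]
  ext i j
  fin_cases i <;> fin_cases j <;> simp [Matrix.mul_apply]

theorem exp_smul_ouDrift (c : ℝ) :
    NormedSpace.exp (c • A₀) = !![Real.exp (-c), 0; 1 - Real.exp (-c), 1] := by
  rw [← neg_smul_neg, NormedSpace.exp_smul_of_isIdempotentElem isIdempotentElem_neg_ouDrift]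
  ext i j
  fin_cases i <;> fin_cases j <;> simp [sub_eq_add_neg]

theorem Gamma_ouArea {ε : ℝ} (hε : ε ≠ 0) (t : ℝ) :
    Gamma A₀ B₀ ε t =
      (2 * ε)⁻¹ • !![Real.exp (ε * t) ^ 2 - 1, -(Real.exp (ε * t) - 1) ^ 2;
        -(Real.exp (ε * t) - 1) ^ 2,
        2 * ε * t + (Real.exp (ε * t) - 1) * (Real.exp (ε * t) - 3)] := by
  have hker : (1 - -A₀) * B₀ = !![0; 1] := by
    ext i j
    fin_cases i <;> fin_cases j <;> simp [Matrix.mul_apply, Matrix.one_apply]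
  have hrange : -A₀ * B₀ = !![1; -1] := by
    ext i j
    fin_cases i <;> fin_cases j <;> simp [Matrix.mul_apply]
  rw [← neg_neg A₀, Gamma_neg_of_isIdempotentElem isIdempotentElem_neg_ouDrift _ hε,
    hker, hrange]
  ext i j
  fin_cases i <;> fin_cases j <;>
    simp [Matrix.mul_apply, Matrix.transpose_apply, -Matrix.cons_mul] <;> field_simp <;> ring

theorem sub_two_mul_exp_add_add_two_pos {x : ℝ} (hx : 0 < x) :
    0 < (x - 2) * Real.exp x + x + 2 := by
  have hmono : StrictMonoOn (fun y => (y - 2) * Real.exp y + y + 2) (Set.Ici 0) := by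
    refine strictMonoOn_of_deriv_pos (convex_Ici 0) (by fun_prop) fun y hy => ?_
    rw [interior_Ici, Set.mem_Ioi] at hy
    have hderiv : HasDerivAt (fun y => (y - 2) * Real.exp y + y + 2)
        ((y - 1) * Real.exp y + 1) y := by
      refine ((((hasDerivAt_id' y).sub_const 2).mul (Real.hasDerivAt_exp y)).add
        (hasDerivAt_id' y)).add_const 2 |>.congr_deriv ?_
      ring
    have hlt : (1 - y) * Real.exp y < 1 := by
      have := mul_lt_mul_of_pos_right (Real.add_one_lt_exp (neg_ne_zero.2 hy.ne'))
        (Real.exp_pos y)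
      rwa [← Real.exp_add, neg_add_cancel, Real.exp_zero, neg_add_eq_sub] at this
    rw [hderiv.deriv]
    linarith
  simpa using hmono (Set.mem_Ici.2 le_rfl) hx.le hx

theorem Gamma_ouArea_one_mul {ε : ℝ} (hε : 0 < ε) :
    Gamma A₀ B₀ ε 1 *
        ((ε / ((Real.exp ε - 1) * ((ε - 2) * Real.exp ε + ε + 2))) •
          !![2 * ε + (Real.exp ε - 1) * (Real.exp ε - 3), (Real.exp ε - 1) ^ 2;
            (Real.exp ε - 1) ^ 2, Real.exp ε ^ 2 - 1]) = 1 := by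
  have hE : Real.exp ε - 1 ≠ 0 := sub_ne_zero.2 (Real.one_lt_exp_iff.2 hε).ne'
  have hD := (sub_two_mul_exp_add_add_two_pos hε).ne'
  have hprod : !![Real.exp ε ^ 2 - 1, -(Real.exp ε - 1) ^ 2;
        -(Real.exp ε - 1) ^ 2, 2 * ε + (Real.exp ε - 1) * (Real.exp ε - 3)] *
      !![2 * ε + (Real.exp ε - 1) * (Real.exp ε - 3), (Real.exp ε - 1) ^ 2;
        (Real.exp ε - 1) ^ 2, Real.exp ε ^ 2 - 1] =
      (2 * ((Real.exp ε - 1) * ((ε - 2) * Real.exp ε + ε + 2))) •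
        (1 : Matrix (Fin 2) (Fin 2) ℝ) := by
    ext i j
    fin_cases i <;> fin_cases j <;> simp <;> ring
  rw [Gamma_ouArea hε.ne', mul_one, smul_mul_smul_comm, mul_one, hprod, smul_smul]
  convert one_smul ℝ (1 : Matrix (Fin 2) (Fin 2) ℝ)
  generalize (ε - 2) * Real.exp ε + ε + 2 = D at hD ⊢
  field_simp

theorem isUnit_Gamma_ouArea_one {ε : ℝ} (hε : 0 < ε) : IsUnit (Gamma A₀ B₀ ε 1) :=
  (isUnit_iff_isUnit_det _).2 (isUnit_det_of_right_inverse (Gamma_ouArea_one_mul hε))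

/-- Explicit formulas for the Ornstein–Uhlenbeck process paired with its area:
`A = [[−1,0],[1,0]]`, `B = (1,0)ᵀ`. -/
theorem ou_area_explicit :
    ∀ ε : ℝ, 0 < ε →
      (∀ r : ℝ,
        NormedSpace.exp ((ε * r) • (!![-1, 0; 1, 0] : Matrix (Fin 2) (Fin 2) ℝ)) =
          !![Real.exp (-(ε * r)), 0; 1 - Real.exp (-(ε * r)), 1]) ∧
      IsUnit (Gamma !![-1, 0; 1, 0] (!![1; 0] : Matrix (Fin 2) (Fin 1) ℝ) ε 1) ∧
      ∀ t : ℝ, t ∈ Set.Icc (0:ℝ) 1 →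
        alphaMat !![-1, 0; 1, 0] (!![1; 0] : Matrix (Fin 2) (Fin 1) ℝ) ε t 0 0 =
          (1 - Real.exp (-(ε * t))) *
              ((ε - 1) * Real.exp (ε * (1 + t)) + Real.exp (ε * t) +
                (ε + 1) * Real.exp ε - Real.exp (2 * ε)) /
            ((Real.exp ε - 1) * ((ε - 2) * Real.exp ε + ε + 2)) ∧
        alphaMat !![-1, 0; 1, 0] (!![1; 0] : Matrix (Fin 2) (Fin 1) ℝ) ε t 0 1 =
          (Real.exp (-ε) - Real.exp (-(ε * (1 - t))) - Real.exp (-(ε * t)) + 1) /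
            ((ε + 2) * Real.exp (-ε) + ε - 2) ∧
        alphaMat !![-1, 0; 1, 0] (!![1; 0] : Matrix (Fin 2) (Fin 1) ℝ) ε t 1 0 =
          (Real.exp (2 * ε) - 1 + (ε + 1) * Real.exp (ε * (1 - t)) + Real.exp (ε * t) +
              (ε - 1) * Real.exp (ε * (1 + t)) - ε * t * (Real.exp ε - 1) ^ 2 -
              2 * ε * Real.exp ε - Real.exp (ε * (2 - t))) /
            ((Real.exp ε - 1) * ((ε - 2) * Real.exp ε + ε + 2)) ∧
        alphaMat !![-1, 0; 1, 0] (!![1; 0] : Matrix (Fin 2) (Fin 1) ℝ) ε t 1 1 =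
          (Real.exp (-(ε * t)) - Real.exp (-(ε * (1 - t))) + (ε * t + 1) * Real.exp (-ε) +
              ε * t - 1) /
            ((ε + 2) * Real.exp (-ε) + ε - 2) := by
  intro ε hε
  refine ⟨fun r => exp_smul_ouDrift (ε * r), isUnit_Gamma_ouArea_one hε, fun t _ => ?_⟩
  have hE : Real.exp ε - 1 ≠ 0 := sub_ne_zero.2 (Real.one_lt_exp_iff.2 hε).ne'
  have hD := (sub_two_mul_exp_add_add_two_pos hε).ne'
  have hD' : (ε + 2) * Real.exp (-ε) + ε - 2 =
      ((ε - 2) * Real.exp ε + ε + 2) * Real.exp (-ε) := by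
    rw [Real.exp_neg]; field_simp; ring
  rw [alphaMat, exp_smul_ouDrift, exp_smul_ouDrift, Gamma_ouArea hε.ne',
    inv_eq_right_inv (Gamma_ouArea_one_mul hε), neg_neg, hD']
  -- the numerators are polynomials in `exp ε`, `exp (ε * t)`, `ε`, `t` alone
  generalize (ε - 2) * Real.exp ε + ε + 2 = D at hD ⊢
  simp only [mul_add, mul_sub, mul_one, two_mul, mul_two, Real.exp_add, Real.exp_sub, Real.exp_neg]
  refine ⟨?_, ?_, ?_, ?_⟩ <;> simp [Matrix.mul_apply, Fin.sum_univ_two] <;> field_simp <;> ring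
end
end

section
/- Fix a positive integer d and let V be the d×d real matrix with entries V_{ij} = (−1)^{j+1} / (i+j−1)! for i, j ∈ {1,…,d}. Then V is invertible and (V^{−1})_{ij} = (−1)^{d+j} (i−1)! · j! · C(d−1, i−1) · C(d+j−1, j) · Σ_{k=0}^{i−1} C(d−i+k, j−1) · C(d+k−1, k), where C(a,b) denotes the binomial coefficient. -/
open Matrix Finset


lemma neg_one_pow_par {R : Type*} [Monoid R] [HasDistribNeg R] {x y : ℕ}
    (h : x % 2 = y % 2) : (-1 : R) ^ x = (-1 : R) ^ y := by
  conv_lhs => rw [← Nat.div_add_mod x 2]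
  conv_rhs => rw [← Nat.div_add_mod y 2]
  rw [pow_add, pow_add, pow_mul, pow_mul, neg_one_sq, one_pow, one_pow, h]

lemma lemA : ∀ (a : ℕ), ∀ (d r : ℕ),
    ∑ m ∈ range (a + 1), (-1 : ℤ) ^ m * (a.choose m) * ((d + m).choose r)
      = (-1) ^ a * (if a ≤ r then ((d.choose (r - a)) : ℤ) else 0) := by
  intro a
  induction a with
  | zero => intro d r; simp
  | succ a ih =>
    intro d r
    set g' : ℕ → ℤ := fun m => (-1 : ℤ) ^ m * (a.choose m) * ((d + m).choose r) with hg'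
    have key : ∑ m ∈ range (a + 1 + 1), (-1 : ℤ) ^ m * ((a+1).choose m) * ((d + m).choose r)
        = (∑ m ∈ range (a + 1), (-1 : ℤ) ^ m * (a.choose m) * ((d + m).choose r))
          - (∑ m ∈ range (a + 1), (-1 : ℤ) ^ m * (a.choose m) * (((d + 1) + m).choose r)) := by
      rw [Finset.sum_range_succ' (fun m => (-1 : ℤ) ^ m * ((a+1).choose m) * ((d + m).choose r))]
      have h1 : ∀ m ∈ range (a+1),
          (-1 : ℤ) ^ (m+1) * ((a+1).choose (m+1)) * ((d + (m+1)).choose r)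
          = g' (m+1) - (-1 : ℤ) ^ m * (a.choose m) * (((d+1) + m).choose r) := by
        intro m _
        rw [hg']
        simp only [Nat.choose_succ_succ' a m]
        have : d + 1 + m = d + (m + 1) := by ring
        rw [this]
        push_cast
        ring
      rw [Finset.sum_congr rfl h1, Finset.sum_sub_distrib]
      have h2 : (∑ m ∈ range (a+1), g' (m+1)) + ((-1:ℤ)^0 * ((a+1).choose 0) * ((d+0).choose r))
          = ∑ m ∈ range (a+1), g' m := by
        have h0 : ((-1:ℤ)^0 * ((a+1).choose 0) * ((d+0).choose r)) = g' 0 := by simp [hg']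
        rw [h0, ← Finset.sum_range_succ' g' (a+1), Finset.sum_range_succ g' (a+1)]
        simp [hg', Nat.choose_succ_self]
      linarith [h2]
    rw [key, ih d r, ih (d+1) r]
    by_cases h : a + 1 ≤ r
    · have ha : a ≤ r := by omega
      rw [if_pos h, if_pos ha, if_pos ha]
      obtain ⟨t, ht⟩ : ∃ t, r - a = t + 1 := ⟨r - a - 1, by omega⟩
      have ht2 : r - (a+1) = t := by omega
      rw [ht, ht2, Nat.choose_succ_succ' d t]
      push_cast
      ring
    · rw [if_neg h]
      by_cases ha : a ≤ r
      · have : r = a := by omega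
        subst this
        simp
      · rw [if_neg ha, if_neg ha]
        ring

lemma lemA' (a N r : ℕ) (haN : a ≤ N) :
    ∑ m ∈ range (a + 1), (-1 : ℤ) ^ m * (a.choose m) * ((N - m).choose r)
      = if a ≤ r then ((N - a).choose (r - a) : ℤ) else 0 := by
  have hrefl := Finset.sum_range_reflect
    (fun m => (-1 : ℤ) ^ m * (a.choose m) * ((N - m).choose r)) (a+1)
  rw [← hrefl]
  have h1 : ∀ m ∈ range (a+1),
      (-1 : ℤ) ^ (a + 1 - 1 - m) * (a.choose (a + 1 - 1 - m)) * ((N - (a + 1 - 1 - m)).choose r)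
      = (-1:ℤ)^a * ((-1 : ℤ) ^ m * (a.choose m) * (((N - a) + m).choose r)) := by
    intro m hm
    simp only [Finset.mem_range] at hm
    have hma : m ≤ a := by omega
    have e1 : a + 1 - 1 - m = a - m := by omega
    have e2 : N - (a - m) = (N - a) + m := by omega
    have e3 : a.choose (a - m) = a.choose m := Nat.choose_symm hma
    have e4 : (-1 : ℤ) ^ (a - m) = (-1:ℤ)^a * (-1:ℤ)^m := by
      rw [← pow_add]
      exact neg_one_pow_par (by omega)
    rw [e1, e2, e3, e4]
    ring
  rw [Finset.sum_congr rfl h1, ← Finset.mul_sum, lemA a (N - a) r, ← mul_assoc,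
    ← pow_add, neg_one_pow_par (x := a + a) (y := 0) (by omega), pow_zero, one_mul]

lemma lemB (d n : ℕ) (hd : 0 < d) (hn : 0 < n) :
    ∑ k ∈ range (n+1), (-1:ℤ)^k * ((d - 1 + k).choose k) * (d.choose (n - k)) = 0 := by
  have hrefl := Finset.sum_range_reflect
    (fun k => (-1:ℤ)^k * ((d - 1 + k).choose k) * (d.choose (n - k))) (n+1)
  rw [← hrefl]
  have h1 : ∀ m ∈ range (n+1),
      (-1:ℤ)^(n + 1 - 1 - m) * ((d - 1 + (n + 1 - 1 - m)).choose (n + 1 - 1 - m))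
        * (d.choose (n - (n + 1 - 1 - m)))
      = (-1:ℤ)^n * ((-1:ℤ)^m * (d.choose m) * (((d - 1 + n) - m).choose (d-1))) := by
    intro m hm
    simp only [Finset.mem_range] at hm
    have hmn : m ≤ n := by omega
    have e1 : n + 1 - 1 - m = n - m := by omega
    have e2 : n - (n - m) = m := by omega
    have e3 : d - 1 + (n - m) = (d - 1 + n) - m := by omega
    have e4 : ((d - 1 + n) - m).choose (n - m) = ((d - 1 + n) - m).choose (d - 1) := by
      have h5 : d - 1 ≤ (d - 1 + n) - m := by omega
      have := Nat.choose_symm h5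
      have e6 : (d - 1 + n) - m - (d - 1) = n - m := by omega
      rw [e6] at this
      exact this
    have e5 : (-1:ℤ)^(n - m) = (-1:ℤ)^n * (-1:ℤ)^m := by
      rw [← pow_add]; exact neg_one_pow_par (by omega)
    rw [e1, e2, e3, e4, e5]
    ring
  rw [Finset.sum_congr rfl h1, ← Finset.mul_sum]
  have h2 : ∑ m ∈ range (n+1), (-1:ℤ)^m * (d.choose m) * (((d - 1 + n) - m).choose (d-1))
      = ∑ m ∈ range (d+1), (-1:ℤ)^m * (d.choose m) * (((d - 1 + n) - m).choose (d-1)) := by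
    rcases le_total n d with h | h
    · apply Finset.sum_subset (Finset.range_subset_range.2 (by omega))
      intro m hm hnm
      simp only [Finset.mem_range] at hm hnm
      have : (d - 1 + n) - m < d - 1 := by omega
      rw [Nat.choose_eq_zero_of_lt this, Nat.cast_zero, mul_zero]
    · symm
      apply Finset.sum_subset (Finset.range_subset_range.2 (by omega))
      intro m hm hnm
      simp only [Finset.mem_range] at hm hnm
      rw [Nat.choose_eq_zero_of_lt (by omega : d < m), Nat.cast_zero, mul_zero, zero_mul]
  rw [h2, lemA' d (d - 1 + n) (d-1) (by omega), if_neg (by omega), mul_zero]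

lemma lemAR (a d r : ℕ) :
    ∑ m ∈ range (a + 1), (-1 : ℝ) ^ m * (a.choose m) * ((d + m).choose r)
      = (-1) ^ a * (if a ≤ r then ((d.choose (r - a)) : ℝ) else 0) := by
  have h := lemA a d r
  by_cases h' : a ≤ r
  · rw [if_pos h']
    rw [if_pos h'] at h
    have := congrArg (fun z : ℤ => (z : ℝ)) h
    push_cast at this
    exact this
  · rw [if_neg h']
    rw [if_neg h'] at h
    have := congrArg (fun z : ℤ => (z : ℝ)) h
    push_cast at this
    exact this

lemma lemBR (d n : ℕ) (hd : 0 < d) (hn : 0 < n) :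
    ∑ k ∈ range (n+1), (-1:ℝ)^k * ((d - 1 + k).choose k : ℝ) * (d.choose (n - k) : ℝ) = 0 := by
  have h := lemB d n hd hn
  have := congrArg (fun z : ℤ => (z : ℝ)) h
  push_cast at this
  exact this

lemma main_sum (d ii ll : ℕ) (hd : 0 < d) (hi : ii < d) (hl : ll < d) :
    ∑ m ∈ range d,
      ((-1:ℝ) ^ (d + (m + 1)) * (Nat.factorial ii : ℝ) * (Nat.factorial (m + 1) : ℝ)
        * (Nat.choose (d - 1) ii : ℝ) * (Nat.choose (d + m) (m + 1) : ℝ)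
        * (∑ k ∈ range (ii + 1),
            (Nat.choose (d - (ii + 1) + k) m : ℝ) * (Nat.choose (d + k - 1) k : ℝ))
        * ((-1:ℝ) ^ (ll + 1 + 1) / (Nat.factorial (m + 1 + (ll + 1) - 1) : ℝ)))
      = if ii = ll then 1 else 0 := by
  have hfne : ∀ n : ℕ, ((Nat.factorial n : ℝ)) ≠ 0 :=
    fun n => Nat.cast_ne_zero.2 (Nat.factorial_ne_zero n)
  have step1 : ∀ m ∈ range d,
      ((-1:ℝ) ^ (d + (m + 1)) * (Nat.factorial ii : ℝ) * (Nat.factorial (m + 1) : ℝ)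
        * (Nat.choose (d - 1) ii : ℝ) * (Nat.choose (d + m) (m + 1) : ℝ)
        * (∑ k ∈ range (ii + 1),
            (Nat.choose (d - (ii + 1) + k) m : ℝ) * (Nat.choose (d + k - 1) k : ℝ))
        * ((-1:ℝ) ^ (ll + 1 + 1) / (Nat.factorial (m + 1 + (ll + 1) - 1) : ℝ)))
      = ∑ k ∈ range (ii + 1),
          (((Nat.factorial ii : ℝ) * (Nat.choose (d - 1) ii : ℝ)
              * (Nat.factorial (d - 1 - ll) : ℝ) / (Nat.factorial (d - 1) : ℝ)
              * (Nat.choose (d - 1 + k) k : ℝ) * (-1:ℝ) ^ (d + 1 + ll))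
            * ((-1:ℝ) ^ m * (Nat.choose (d - 1 - ii + k) m : ℝ)
              * (Nat.choose (d + m) (d - 1 - ll) : ℝ))) := by
    intro m hm
    simp only [Finset.mem_range] at hm
    rw [show m + 1 + (ll + 1) - 1 = m + ll + 1 from by omega]
    rw [Finset.mul_sum, Finset.sum_mul]
    apply Finset.sum_congr rfl
    intro k hk
    simp only [Finset.mem_range] at hk
    rw [show d - (ii + 1) + k = d - 1 - ii + k from by omega,
        show d + k - 1 = d - 1 + k from by omega]
    have f1 : Nat.choose (d + m) (m + 1) * Nat.factorial (m + 1) * Nat.factorial (d - 1)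
        = Nat.factorial (d + m) := by
      have h1 : m + 1 ≤ d + m := by omega
      have h2 := Nat.choose_mul_factorial_mul_factorial h1
      rwa [show d + m - (m + 1) = d - 1 from by omega] at h2
    have f2 : Nat.choose (d + m) (d - 1 - ll) * Nat.factorial (d - 1 - ll)
        * Nat.factorial (m + ll + 1) = Nat.factorial (d + m) := by
      have h1 : d - 1 - ll ≤ d + m := by omega
      have h2 := Nat.choose_mul_factorial_mul_factorial h1
      rwa [show d + m - (d - 1 - ll) = m + ll + 1 from by omega] at h2
    have c1 := congrArg (Nat.cast : ℕ → ℝ) f1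
    have c2 := congrArg (Nat.cast : ℕ → ℝ) f2
    push_cast at c1 c2
    have s : (-1:ℝ) ^ (d + (m + 1)) * (-1:ℝ) ^ (ll + 1 + 1)
        = (-1:ℝ) ^ (d + 1 + ll) * (-1:ℝ) ^ m := by
      rw [← pow_add, ← pow_add]; exact neg_one_pow_par (by omega)
    have h1 := hfne (m + ll + 1)
    have h2 := hfne (d - 1)
    field_simp
    linear_combination
      ((Nat.choose (d - 1) ii : ℝ)
          * (Nat.choose (d - 1 - ii + k) m : ℝ) * (Nat.choose (d - 1 + k) k : ℝ)
          * ((-1:ℝ) ^ (d + (m + 1)) * (-1:ℝ) ^ (ll + 1 + 1))) * (c1 - c2)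
      + ((Nat.choose (d - 1) ii : ℝ)
          * (Nat.choose (d - 1 - ii + k) m : ℝ) * (Nat.choose (d - 1 + k) k : ℝ)
          * (Nat.factorial (d - 1 - ll) : ℝ) * (Nat.choose (d + m) (d - 1 - ll) : ℝ)
          * (Nat.factorial (m + ll + 1) : ℝ)) * s
  rw [Finset.sum_congr rfl step1, Finset.sum_comm]
  have step3 : ∀ k ∈ range (ii + 1),
      (∑ m ∈ range d,
        (((Nat.factorial ii : ℝ) * (Nat.choose (d - 1) ii : ℝ)
              * (Nat.factorial (d - 1 - ll) : ℝ) / (Nat.factorial (d - 1) : ℝ)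
              * (Nat.choose (d - 1 + k) k : ℝ) * (-1:ℝ) ^ (d + 1 + ll))
            * ((-1:ℝ) ^ m * (Nat.choose (d - 1 - ii + k) m : ℝ)
              * (Nat.choose (d + m) (d - 1 - ll) : ℝ))))
      = ((Nat.factorial ii : ℝ) * (Nat.choose (d - 1) ii : ℝ)
          * (Nat.factorial (d - 1 - ll) : ℝ) / (Nat.factorial (d - 1) : ℝ)
          * (Nat.choose (d - 1 + k) k : ℝ))
        * ((-1:ℝ) ^ (ii + ll + k)
            * (if k + ll ≤ ii then (Nat.choose d (ii - ll - k) : ℝ) else 0)) := by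
    intro k hk
    simp only [Finset.mem_range] at hk
    rw [← Finset.mul_sum]
    have htr : ∑ m ∈ range d,
        ((-1:ℝ) ^ m * (Nat.choose (d - 1 - ii + k) m : ℝ)
          * (Nat.choose (d + m) (d - 1 - ll) : ℝ))
        = ∑ m ∈ range (d - 1 - ii + k + 1),
          ((-1:ℝ) ^ m * (Nat.choose (d - 1 - ii + k) m : ℝ)
            * (Nat.choose (d + m) (d - 1 - ll) : ℝ)) := by
      symm
      apply Finset.sum_subset (Finset.range_subset_range.2 (by omega))
      intro m hm hnm
      simp only [Finset.mem_range] at hm hnm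
      rw [Nat.choose_eq_zero_of_lt (by omega : d - 1 - ii + k < m), Nat.cast_zero,
        mul_zero, zero_mul]
    rw [htr, lemAR (d - 1 - ii + k) d (d - 1 - ll)]
    have hite : (if d - 1 - ii + k ≤ d - 1 - ll
          then ((Nat.choose d (d - 1 - ll - (d - 1 - ii + k))) : ℝ) else 0)
        = (if k + ll ≤ ii then (Nat.choose d (ii - ll - k) : ℝ) else 0) := by
      by_cases h : k + ll ≤ ii
      · rw [if_pos (by omega), if_pos h]
        congr 2
        omega
      · rw [if_neg (by omega), if_neg h]
    rw [hite]
    have s : (-1:ℝ) ^ (d + 1 + ll) * (-1:ℝ) ^ (d - 1 - ii + k) = (-1:ℝ) ^ (ii + ll + k) := by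
      rw [← pow_add]; exact neg_one_pow_par (by omega)
    calc ((Nat.factorial ii : ℝ) * (Nat.choose (d - 1) ii : ℝ)
          * (Nat.factorial (d - 1 - ll) : ℝ) / (Nat.factorial (d - 1) : ℝ)
          * (Nat.choose (d - 1 + k) k : ℝ) * (-1:ℝ) ^ (d + 1 + ll))
        * ((-1:ℝ) ^ (d - 1 - ii + k)
            * (if k + ll ≤ ii then (Nat.choose d (ii - ll - k) : ℝ) else 0))
        = ((Nat.factorial ii : ℝ) * (Nat.choose (d - 1) ii : ℝ)
          * (Nat.factorial (d - 1 - ll) : ℝ) / (Nat.factorial (d - 1) : ℝ)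
          * (Nat.choose (d - 1 + k) k : ℝ))
          * (((-1:ℝ) ^ (d + 1 + ll) * (-1:ℝ) ^ (d - 1 - ii + k))
            * (if k + ll ≤ ii then (Nat.choose d (ii - ll - k) : ℝ) else 0)) := by ring
      _ = _ := by rw [s]
  rw [Finset.sum_congr rfl step3]
  by_cases hil : ll ≤ ii
  · have htr2 : ∑ k ∈ range (ii + 1),
        (((Nat.factorial ii : ℝ) * (Nat.choose (d - 1) ii : ℝ)
          * (Nat.factorial (d - 1 - ll) : ℝ) / (Nat.factorial (d - 1) : ℝ)
          * (Nat.choose (d - 1 + k) k : ℝ))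
        * ((-1:ℝ) ^ (ii + ll + k)
            * (if k + ll ≤ ii then (Nat.choose d (ii - ll - k) : ℝ) else 0)))
        = ∑ k ∈ range (ii - ll + 1),
        (((Nat.factorial ii : ℝ) * (Nat.choose (d - 1) ii : ℝ)
          * (Nat.factorial (d - 1 - ll) : ℝ) / (Nat.factorial (d - 1) : ℝ))
          * (-1:ℝ) ^ (ii - ll))
        * ((-1:ℝ) ^ k * (Nat.choose (d - 1 + k) k : ℝ)
            * (Nat.choose d (ii - ll - k) : ℝ)) := by
      rw [← Finset.sum_subset (Finset.range_subset_range.2 (by omega : ii - ll + 1 ≤ ii + 1))]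
      · apply Finset.sum_congr rfl
        intro k hk
        simp only [Finset.mem_range] at hk
        rw [if_pos (by omega)]
        have s2 : (-1:ℝ) ^ (ii + ll + k) = (-1:ℝ) ^ (ii - ll) * (-1:ℝ) ^ k := by
          rw [← pow_add]; exact neg_one_pow_par (by omega)
        rw [s2]; ring
      · intro k hk hnk
        simp only [Finset.mem_range] at hk hnk
        rw [if_neg (by omega), mul_zero, mul_zero]
    rw [htr2, ← Finset.mul_sum]
    by_cases hn : ii = ll
    · subst hn
      rw [if_pos rfl]
      simp only [Nat.sub_self, Finset.range_one, Finset.sum_singleton, pow_zero,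
        Nat.choose_self, Nat.choose_zero_right, Nat.add_zero, Nat.cast_one, Nat.zero_add]
      have f3 : Nat.choose (d - 1) ii * Nat.factorial ii * Nat.factorial (d - 1 - ii)
          = Nat.factorial (d - 1) := Nat.choose_mul_factorial_mul_factorial (by omega)
      have c3 := congrArg (Nat.cast : ℕ → ℝ) f3
      push_cast at c3
      have h2 := hfne (d - 1)
      field_simp
      linear_combination c3
    · rw [if_neg hn]
      rw [lemBR d (ii - ll) hd (by omega), mul_zero]
  · rw [if_neg (by omega)]
    apply Finset.sum_eq_zero
    intro k hk
    rw [if_neg (by omega), mul_zero, mul_zero]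

/-- For the `d × d` matrix `V` with entries `V_{ij} = (−1)^{j+1}/(i+j−1)!`
(one-based indices), `V` is invertible and
`(V⁻¹)_{ij} = (−1)^{d+j} (i−1)! j! C(d−1,i−1) C(d+j−1,j) Σ_{k=0}^{i−1} C(d−i+k,j−1) C(d+k−1,k)`. -/
theorem hankel_inverse (d : ℕ) (hd : 0 < d)
    (V : Matrix (Fin d) (Fin d) ℝ)
    (hV : ∀ i j : Fin d,
      V i j = (-1 : ℝ) ^ ((j : ℕ) + 1 + 1) /
        (Nat.factorial ((i : ℕ) + 1 + ((j : ℕ) + 1) - 1) : ℝ)) :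
    IsUnit V ∧
    ∀ i j : Fin d,
      V⁻¹ i j =
        (-1 : ℝ) ^ (d + ((j : ℕ) + 1)) *
          (Nat.factorial (i : ℕ) : ℝ) * (Nat.factorial ((j : ℕ) + 1) : ℝ) *
          (Nat.choose (d - 1) (i : ℕ) : ℝ) * (Nat.choose (d + (j : ℕ)) ((j : ℕ) + 1) : ℝ) *
          ∑ k ∈ Finset.range ((i : ℕ) + 1),
            (Nat.choose (d - ((i : ℕ) + 1) + k) (j : ℕ) : ℝ) *
              (Nat.choose (d + k - 1) k : ℝ) := by
  set W : Matrix (Fin d) (Fin d) ℝ := fun i j =>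
    (-1 : ℝ) ^ (d + ((j : ℕ) + 1)) *
      (Nat.factorial (i : ℕ) : ℝ) * (Nat.factorial ((j : ℕ) + 1) : ℝ) *
      (Nat.choose (d - 1) (i : ℕ) : ℝ) * (Nat.choose (d + (j : ℕ)) ((j : ℕ) + 1) : ℝ) *
      ∑ k ∈ Finset.range ((i : ℕ) + 1),
        (Nat.choose (d - ((i : ℕ) + 1) + k) (j : ℕ) : ℝ) *
          (Nat.choose (d + k - 1) k : ℝ) with hW
  have hWV : W * V = 1 := by
    ext i l
    rw [Matrix.mul_apply, Matrix.one_apply]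
    have hterm : ∀ m : Fin d, W i m * V m l =
        ((-1:ℝ) ^ (d + ((m : ℕ) + 1)) * (Nat.factorial (i : ℕ) : ℝ)
          * (Nat.factorial ((m : ℕ) + 1) : ℝ)
          * (Nat.choose (d - 1) (i : ℕ) : ℝ) * (Nat.choose (d + (m : ℕ)) ((m : ℕ) + 1) : ℝ)
          * (∑ k ∈ range ((i : ℕ) + 1),
              (Nat.choose (d - ((i : ℕ) + 1) + k) (m : ℕ) : ℝ)
                * (Nat.choose (d + k - 1) k : ℝ))
          * ((-1:ℝ) ^ ((l : ℕ) + 1 + 1)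
              / (Nat.factorial ((m : ℕ) + 1 + ((l : ℕ) + 1) - 1) : ℝ))) := by
      intro m
      rw [hW, hV]
    calc ∑ m : Fin d, W i m * V m l
        = ∑ m : Fin d,
          ((-1:ℝ) ^ (d + ((m : ℕ) + 1)) * (Nat.factorial (i : ℕ) : ℝ)
            * (Nat.factorial ((m : ℕ) + 1) : ℝ)
            * (Nat.choose (d - 1) (i : ℕ) : ℝ) * (Nat.choose (d + (m : ℕ)) ((m : ℕ) + 1) : ℝ)
            * (∑ k ∈ range ((i : ℕ) + 1),
                (Nat.choose (d - ((i : ℕ) + 1) + k) (m : ℕ) : ℝ)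
                  * (Nat.choose (d + k - 1) k : ℝ))
            * ((-1:ℝ) ^ ((l : ℕ) + 1 + 1)
                / (Nat.factorial ((m : ℕ) + 1 + ((l : ℕ) + 1) - 1) : ℝ))) :=
          Finset.sum_congr rfl fun m _ => hterm m
      _ = ∑ m ∈ range d,
          ((-1:ℝ) ^ (d + (m + 1)) * (Nat.factorial (i : ℕ) : ℝ)
            * (Nat.factorial (m + 1) : ℝ)
            * (Nat.choose (d - 1) (i : ℕ) : ℝ) * (Nat.choose (d + m) (m + 1) : ℝ)
            * (∑ k ∈ range ((i : ℕ) + 1),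
                (Nat.choose (d - ((i : ℕ) + 1) + k) m : ℝ)
                  * (Nat.choose (d + k - 1) k : ℝ))
            * ((-1:ℝ) ^ ((l : ℕ) + 1 + 1)
                / (Nat.factorial (m + 1 + ((l : ℕ) + 1) - 1) : ℝ))) :=
          Fin.sum_univ_eq_sum_range (fun m =>
            ((-1:ℝ) ^ (d + (m + 1)) * (Nat.factorial (i : ℕ) : ℝ)
              * (Nat.factorial (m + 1) : ℝ)
              * (Nat.choose (d - 1) (i : ℕ) : ℝ) * (Nat.choose (d + m) (m + 1) : ℝ)
              * (∑ k ∈ range ((i : ℕ) + 1),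
                  (Nat.choose (d - ((i : ℕ) + 1) + k) m : ℝ)
                    * (Nat.choose (d + k - 1) k : ℝ))
              * ((-1:ℝ) ^ ((l : ℕ) + 1 + 1)
                  / (Nat.factorial (m + 1 + ((l : ℕ) + 1) - 1) : ℝ)))) d
      _ = if (i : ℕ) = (l : ℕ) then 1 else 0 := main_sum d i l hd i.isLt l.isLt
      _ = if i = l then (1:ℝ) else 0 := by simp [Fin.ext_iff]
  refine ⟨(Matrix.isUnit_iff_isUnit_det V).2 (Matrix.isUnit_det_of_left_inverse hWV), fun i j => ?_⟩
  rw [Matrix.inv_eq_left_inv hWV, hW]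
end
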